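/- arXiv:1903.00282 — 10 statements merged into one kernel-verified Lean document; each statement's English description precedes it below -/
import Mathlib

section
/- Let P be an ω-hypergraph, n ∈ ℕ, U, V ⊆ P_n and S ⊆ P_{n+1} finite subsets such that S moves U to V. Then for all finite X, Y ⊆ P_n with X ⊆ U, X ∩ (S⁻ \ S⁺) = ∅, and Y ∩ (S⁻ ∪ S⁺) = ∅, the set S moves (U ∪ Y) \ X to (V ∪ Y) \ X. -/
/-- An ω-hypergraph: a graded set together with, for each generator of dimension `n+1`,
finite sets of source and target generators of dimension `n`. -/
structure OHG where
  gen : ℕ → Type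
  deceq : ∀ n, DecidableEq (gen n)
  src : ∀ {n : ℕ}, gen (n + 1) → Finset (gen n)
  tgt : ∀ {n : ℕ}, gen (n + 1) → Finset (gen n)

attribute [instance] OHG.deceq

namespace OHG

/-- `S⁻`, for a set `S` of `(n+1)`-generators. -/
def setSrc (P : OHG) {n : ℕ} (S : Finset (P.gen (n + 1))) : Finset (P.gen n) :=
  S.biUnion P.src

/-- `S⁺`, for a set `S` of `(n+1)`-generators. -/
def setTgt (P : OHG) {n : ℕ} (S : Finset (P.gen (n + 1))) : Finset (P.gen n) :=
  S.biUnion P.tgt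

/-- `S∓ = S⁻ \ S⁺`. -/
def mp (P : OHG) {n : ℕ} (S : Finset (P.gen (n + 1))) : Finset (P.gen n) :=
  P.setSrc S \ P.setTgt S

/-- `S± = S⁺ \ S⁻`. -/
def pm (P : OHG) {n : ℕ} (S : Finset (P.gen (n + 1))) : Finset (P.gen n) :=
  P.setTgt S \ P.setSrc S

/-- `S` moves `U` to `V`. -/
def Moves (P : OHG) {n : ℕ} (S : Finset (P.gen (n + 1))) (U V : Finset (P.gen n)) : Prop :=
  V = (U ∪ P.setTgt S) \ P.setSrc S ∧ U = (V ∪ P.setSrc S) \ P.setTgt S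

end OHG

lemma aux_logic (u v x y sa sb : Prop)
    (h1 : v ↔ (u ∨ sb) ∧ ¬sa) (h2 : u ↔ (v ∨ sa) ∧ ¬sb)
    (hx : x → ¬(sa ∧ ¬sb)) (hy : y → ¬(sa ∨ sb)) (hxu : x → u) :
    ((v ∨ y) ∧ ¬x ↔ (((u ∨ y) ∧ ¬x ∨ sb) ∧ ¬sa)) ∧
    ((u ∨ y) ∧ ¬x ↔ (((v ∨ y) ∧ ¬x ∨ sa) ∧ ¬sb)) := by
  tauto

theorem statement1 (P : OHG) (n : ℕ) (U V : Finset (P.gen n)) (S : Finset (P.gen (n + 1)))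
    (hmove : P.Moves S U V) :
    ∀ X Y : Finset (P.gen n), X ⊆ U → X ∩ P.mp S = ∅ →
      Y ∩ (P.setSrc S ∪ P.setTgt S) = ∅ →
      P.Moves S ((U ∪ Y) \ X) ((V ∪ Y) \ X) := by
  obtain ⟨h1, h2⟩ := hmove
  intro X Y hXU hXmp hY
  rw [Finset.eq_empty_iff_forall_notMem] at hXmp hY
  rw [Finset.ext_iff] at h1 h2
  have key : ∀ a : P.gen n,
      ((a ∈ V ∨ a ∈ Y) ∧ a ∉ X ↔ (((a ∈ U ∨ a ∈ Y) ∧ a ∉ X ∨ a ∈ P.setTgt S) ∧ a ∉ P.setSrc S)) ∧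
      ((a ∈ U ∨ a ∈ Y) ∧ a ∉ X ↔ (((a ∈ V ∨ a ∈ Y) ∧ a ∉ X ∨ a ∈ P.setSrc S) ∧ a ∉ P.setTgt S)) := by
    intro a
    have h1a := h1 a
    have h2a := h2 a
    have hxa := hXmp a
    have hya := hY a
    have hxua := @hXU a
    simp only [Finset.mem_sdiff, Finset.mem_union, Finset.mem_inter, OHG.mp,
      Finset.mem_sdiff] at h1a h2a hxa hya
    exact aux_logic _ _ _ _ _ _ h1a h2a (fun hx => by tauto) (fun hy => by tauto) hxua
  constructor <;> ext a <;>
    simp only [Finset.mem_sdiff, Finset.mem_union]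
  · exact (key a).1
  · exact (key a).2
end

section
/- Let P be an ω-hypergraph, n ∈ ℕ, finite subsets U, V, W ⊆ P_n and S, T ⊆ P_{n+1} such that S moves U to V and T moves V to W. If S⁻ ∩ T⁺ = ∅, then S ∪ T moves U to W. -/
set_option maxHeartbeats 1000000 in
theorem statement2 (P : OHG) (n : ℕ) (U V W : Finset (P.gen n))
    (S T : Finset (P.gen (n + 1)))
    (hS : P.Moves S U V) (hT : P.Moves T V W)
    (h : P.setSrc S ∩ P.setTgt T = ∅) :
    P.Moves (S ∪ T) U W := by
  obtain ⟨hV, hU⟩ := hS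
  obtain ⟨hW, hV'⟩ := hT
  have hsrc : P.setSrc (S ∪ T) = P.setSrc S ∪ P.setSrc T := by ext a; simp [OHG.setSrc, Finset.mem_biUnion, Finset.mem_union, or_and_right, exists_or]
  have htgt : P.setTgt (S ∪ T) = P.setTgt S ∪ P.setTgt T := by ext a; simp [OHG.setTgt, Finset.mem_biUnion, Finset.mem_union, or_and_right, exists_or]
  have hd : ∀ a, ¬(a ∈ P.setSrc S ∧ a ∈ P.setTgt T) := by
    intro a ha
    have : a ∈ P.setSrc S ∩ P.setTgt T := Finset.mem_inter.mpr ha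
    simp [h] at this
  constructor
  · ext a
    have h1 := Finset.ext_iff.mp hV a
    have h2 := Finset.ext_iff.mp hU a
    have h3 := Finset.ext_iff.mp hW a
    have h4 := Finset.ext_iff.mp hV' a
    have h5 := hd a
    simp only [hsrc, htgt, Finset.mem_sdiff, Finset.mem_union] at h1 h2 h3 h4 ⊢
    tauto
  · ext a
    have h1 := Finset.ext_iff.mp hV a
    have h2 := Finset.ext_iff.mp hU a
    have h3 := Finset.ext_iff.mp hW a
    have h4 := Finset.ext_iff.mp hV' a
    have h5 := hd a
    simp only [hsrc, htgt, Finset.mem_sdiff, Finset.mem_union] at h1 h2 h3 h4 ⊢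
    tauto
end

section
/- Let P be an ω-hypergraph, n ∈ ℕ, finite subsets U, W ⊆ P_n and S, T ⊆ P_{n+1} such that S ∪ T moves U to W and S⁻ \ S⁺ ⊆ U. If S ⊥ T (i.e. S⁻ ∩ T⁻ = ∅ and S⁺ ∩ T⁺ = ∅), then there exists V ⊆ P_n such that S moves U to V and T moves V to W. -/
namespace OHG

/-- `S ⊥ T` : the sources of `S` and `T` are disjoint, and so are their targets. -/
def Perp (P : OHG) {n : ℕ} (S T : Finset (P.gen (n + 1))) : Prop :=
  P.setSrc S ∩ P.setSrc T = ∅ ∧ P.setTgt S ∩ P.setTgt T = ∅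

end OHG

set_option maxHeartbeats 2000000 in
lemma perp_key (u w sm sp tm tp : Prop)
    (h1 : w ↔ (u ∨ sp ∨ tp) ∧ ¬(sm ∨ tm))
    (h2 : u ↔ (w ∨ sm ∨ tm) ∧ ¬(sp ∨ tp))
    (h3 : ¬(sm ∧ tm)) (h4 : ¬(sp ∧ tp))
    (h5 : sm ∧ ¬sp → u) :
    (u ↔ (((u ∨ sp) ∧ ¬sm) ∨ sm) ∧ ¬sp) ∧
    (w ↔ (((u ∨ sp) ∧ ¬sm) ∨ tp) ∧ ¬tm) ∧
    ((u ∨ sp) ∧ ¬sm ↔ (w ∨ tm) ∧ ¬tp) := by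
  by_cases hsm : sm <;> by_cases hsp : sp <;> by_cases htm : tm <;> by_cases htp : tp <;>
    simp_all

theorem statement3 (P : OHG) (n : ℕ) (U W : Finset (P.gen n))
    (S T : Finset (P.gen (n + 1)))
    (hST : P.Moves (S ∪ T) U W) (hmp : P.mp S ⊆ U) (hperp : P.Perp S T) :
    ∃ V : Finset (P.gen n), P.Moves S U V ∧ P.Moves T V W := by
  obtain ⟨h1, h2⟩ := hST
  obtain ⟨hp1, hp2⟩ := hperp
  have hsrc : P.setSrc (S ∪ T) = P.setSrc S ∪ P.setSrc T := by
    ext x; simp [OHG.setSrc, Finset.mem_union, Finset.mem_biUnion, or_and_right, exists_or]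
  have htgt : P.setTgt (S ∪ T) = P.setTgt S ∪ P.setTgt T := by
    ext x; simp [OHG.setTgt, Finset.mem_union, Finset.mem_biUnion, or_and_right, exists_or]
  rw [hsrc, htgt] at h1 h2
  have key : ∀ a : P.gen n,
      (a ∈ U ↔ (((a ∈ U ∨ a ∈ P.setTgt S) ∧ ¬ a ∈ P.setSrc S) ∨ a ∈ P.setSrc S) ∧
        ¬ a ∈ P.setTgt S) ∧
      (a ∈ W ↔ (((a ∈ U ∨ a ∈ P.setTgt S) ∧ ¬ a ∈ P.setSrc S) ∨ a ∈ P.setTgt T) ∧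
        ¬ a ∈ P.setSrc T) ∧
      ((a ∈ U ∨ a ∈ P.setTgt S) ∧ ¬ a ∈ P.setSrc S ↔
        (a ∈ W ∨ a ∈ P.setSrc T) ∧ ¬ a ∈ P.setTgt T) := by
    intro a
    have e1 : a ∈ W ↔ (a ∈ U ∨ a ∈ P.setTgt S ∨ a ∈ P.setTgt T) ∧
        ¬(a ∈ P.setSrc S ∨ a ∈ P.setSrc T) := by
      conv_lhs => rw [h1]
      simp [Finset.mem_sdiff, Finset.mem_union]
    have e2 : a ∈ U ↔ (a ∈ W ∨ a ∈ P.setSrc S ∨ a ∈ P.setSrc T) ∧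
        ¬(a ∈ P.setTgt S ∨ a ∈ P.setTgt T) := by
      conv_lhs => rw [h2]
      simp [Finset.mem_sdiff, Finset.mem_union]
    have e3 : ¬(a ∈ P.setSrc S ∧ a ∈ P.setSrc T) := by
      intro h; have : a ∈ P.setSrc S ∩ P.setSrc T := Finset.mem_inter.mpr h
      rw [hp1] at this; exact absurd this (Finset.notMem_empty a)
    have e4 : ¬(a ∈ P.setTgt S ∧ a ∈ P.setTgt T) := by
      intro h; have : a ∈ P.setTgt S ∩ P.setTgt T := Finset.mem_inter.mpr h
      rw [hp2] at this; exact absurd this (Finset.notMem_empty a)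
    have e5 : a ∈ P.setSrc S ∧ ¬ a ∈ P.setTgt S → a ∈ U := by
      intro h; exact hmp (Finset.mem_sdiff.mpr h)
    exact perp_key _ _ _ _ _ _ e1 e2 e3 e4 e5
  refine ⟨(U ∪ P.setTgt S) \ P.setSrc S, ⟨rfl, ?_⟩, ?_, ?_⟩
  · ext a
    simp only [Finset.mem_sdiff, Finset.mem_union]
    exact (key a).1
  · ext a
    simp only [Finset.mem_sdiff, Finset.mem_union]
    exact (key a).2.1
  · ext a
    simp only [Finset.mem_sdiff, Finset.mem_union]
    exact (key a).2.2
end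

section
/- Let P be an ω-hypergraph, n ∈ ℕ, finite subsets U, V ⊆ P_n and S ⊆ P_{n+1}. If S moves U to V, then S⁻ \ S⁺ = U \ V and S⁺ \ S⁻ = V \ U. In particular, if some other set T also moves U to V, then S⁻ \ S⁺ = T⁻ \ T⁺ and S⁺ \ S⁻ = T⁺ \ T⁻. -/
lemma key (P : OHG) (n : ℕ) (U V : Finset (P.gen n))
    (S : Finset (P.gen (n + 1))) (hS : P.Moves S U V) :
    P.mp S = U \ V ∧ P.pm S = V \ U := by
  obtain ⟨h1, h2⟩ := hS
  have hV : ∀ a, a ∈ V ↔ (a ∈ U ∨ a ∈ P.setTgt S) ∧ a ∉ P.setSrc S := fun a => by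
    rw [h1]; simp
  have hU : ∀ a, a ∈ U ↔ (a ∈ V ∨ a ∈ P.setSrc S) ∧ a ∉ P.setTgt S := fun a => by
    rw [h2]; simp
  constructor <;> ext a <;>
    simp only [OHG.mp, OHG.pm, Finset.mem_sdiff] <;>
    have h1a := hV a <;> have h2a := hU a <;> tauto

theorem statement4 (P : OHG) (n : ℕ) (U V : Finset (P.gen n))
    (S : Finset (P.gen (n + 1))) (hS : P.Moves S U V) :
    (P.mp S = U \ V ∧ P.pm S = V \ U) ∧
    ∀ T : Finset (P.gen (n + 1)), P.Moves T U V →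
      P.mp S = P.mp T ∧ P.pm S = P.pm T := by
  refine ⟨key P n U V S hS, fun T hT => ?_⟩
  obtain ⟨hs1, hs2⟩ := key P n U V S hS
  obtain ⟨ht1, ht2⟩ := key P n U V T hT
  exact ⟨hs1.trans ht1.symm, hs2.trans ht2.symm⟩
end

section
/- Let (S, <) be a finite poset and let Linext(S) be the category whose objects are linear extensions σ : {1,…,|S|} → S (bijections such that σ(i) < σ(j) implies i < j) and whose morphisms from σ to τ are functions f : {1,…,|S|} → {1,…,|S|} with τ ∘ f = σ. Then every morphism of Linext(S) is a composite of consecutive transpositions (i i+1) that are morphisms between linear extensions. -/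
/-- A linear extension of the finite poset `S`: a bijection `σ : Fin |S| ≃ S`
such that `σ i < σ j` implies `i < j`. -/
def IsLinExt {n : ℕ} {S : Type*} [PartialOrder S] (σ : Fin n ≃ S) : Prop :=
  ∀ i j : Fin n, σ i < σ j → i < j

/-- `AdjSwapGen σ τ f` : the morphism `f : σ → τ` of linear extensions (i.e. `τ ∘ f = σ`)
is a composite of consecutive transpositions `(i i+1)`, each of which is a morphism
between linear extensions (all the intermediate stages are linear extensions). -/
inductive AdjSwapGen {n : ℕ} {S : Type*} [PartialOrder S] :
    (Fin n ≃ S) → (Fin n ≃ S) → (Fin n → Fin n) → Prop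
  | refl (σ : Fin n ≃ S) : AdjSwapGen σ σ id
  | step {ρ τ : Fin n ≃ S} {g : Fin n → Fin n} (σ : Fin n ≃ S) (i j : Fin n)
      (hij : (j : ℕ) = (i : ℕ) + 1) (hρ : IsLinExt ρ)
      (hσρ : ∀ k, ρ (Equiv.swap i j k) = σ k)
      (htail : AdjSwapGen ρ τ g) :
      AdjSwapGen σ τ (g ∘ Equiv.swap i j)

/-- The set of inversions of a self-map of `Fin n`. -/
def Invs {n : ℕ} (p : Fin n → Fin n) : Finset (Fin n × Fin n) :=
  Finset.univ.filter fun ab => ab.1 < ab.2 ∧ p ab.2 < p ab.1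

lemma swap_lt_of_lt {n : ℕ} {i j : Fin n} (hij : (j : ℕ) = (i : ℕ) + 1)
    {a b : Fin n} (hab : a < b) (hne : ¬(a = i ∧ b = j)) :
    Equiv.swap i j a < Equiv.swap i j b := by
  simp only [Equiv.swap_apply_def]
  simp only [Fin.ext_iff, Fin.lt_def] at *
  split_ifs <;> omega

lemma invs_swap_lt {n : ℕ} {p : Fin n → Fin n} {i j : Fin n}
    (hij : (j : ℕ) = (i : ℕ) + 1) (hd : p j < p i) :
    (Invs (p ∘ Equiv.swap i j)).card < (Invs p).card := by
  have hijlt : i < j := by rw [Fin.lt_def]; omega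
  have hmem : (i, j) ∈ Invs p := by
    simp [Invs, hijlt, hd]
  have hcard : (Invs (p ∘ Equiv.swap i j)).card ≤ ((Invs p).erase (i, j)).card := by
    apply Finset.card_le_card_of_injOn (fun ab => (Equiv.swap i j ab.1, Equiv.swap i j ab.2))
    · rintro ⟨a, b⟩ hab
      simp only [Finset.mem_coe, Invs, Finset.mem_filter, Finset.mem_univ, true_and, Function.comp] at hab
      obtain ⟨h1, h2⟩ := hab
      have hne : ¬(a = i ∧ b = j) := by
        rintro ⟨rfl, rfl⟩
        rw [Equiv.swap_apply_left, Equiv.swap_apply_right] at h2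
        exact absurd h2 (not_lt.2 hd.le)
      rw [Finset.mem_coe, Finset.mem_erase]
      constructor
      · intro h
        have ha : a = j := by
          have := congrArg Prod.fst h
          simpa using congrArg (Equiv.swap i j) this
        have hb : b = i := by
          have := congrArg Prod.snd h
          simpa using congrArg (Equiv.swap i j) this
        subst ha; subst hb
        exact absurd h1 (not_lt.2 hijlt.le)
      · simp only [Invs, Finset.mem_filter, Finset.mem_univ, true_and]
        exact ⟨swap_lt_of_lt hij h1 hne, h2⟩
    · rintro ⟨a, b⟩ - ⟨c, d⟩ - h
      have h1 := congrArg Prod.fst h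
      have h2 := congrArg Prod.snd h
      simp only at h1 h2
      have := (Equiv.swap i j).injective h1
      have := (Equiv.swap i j).injective h2
      simp_all
  calc (Invs (p ∘ Equiv.swap i j)).card ≤ ((Invs p).erase (i, j)).card := hcard
    _ < (Invs p).card := Finset.card_erase_lt_of_mem hmem

lemma key_s7 {n : ℕ} {S : Type*} [PartialOrder S] (τ : Fin n ≃ S) (hτ : IsLinExt τ) :
    ∀ N (σ : Fin n ≃ S), IsLinExt σ → (Invs (σ.trans τ.symm)).card ≤ N →
      AdjSwapGen σ τ (σ.trans τ.symm) := by
  intro N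
  induction N with
  | zero =>
    intro σ hσ hle
    -- no inversions: p is strictly monotone, hence the identity
    set p := σ.trans τ.symm with hp
    have hcard : (Invs p).card = 0 := Nat.le_zero.1 hle
    have hnoinv : ∀ a b : Fin n, a < b → ¬ p b < p a := by
      intro a b hab hlt
      have : (a, b) ∈ Invs p := by simp [Invs, hab, hlt]
      rw [Finset.card_eq_zero.1 hcard] at this
      simp at this
    have hmono : StrictMono p := by
      intro a b hab
      rcases lt_trichotomy (p a) (p b) with h | h | h
      · exact h
      · exact absurd (p.injective h) (ne_of_lt hab)
      · exact absurd h (hnoinv a b hab)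
    have hpid : (p : Fin n → Fin n) = id :=
      (StrictMono.range_inj hmono strictMono_id).1 (by
        rw [Set.range_id, Set.range_eq_univ]; exact p.surjective)
    have hστ : σ = τ := by
      apply Equiv.ext; intro k
      have : p k = k := congrFun hpid k
      have := congrArg τ this
      simpa [hp] using this
    rw [show ((σ.trans τ.symm : Fin n ≃ Fin n) : Fin n → Fin n) = id from hpid, hστ]
    exact AdjSwapGen.refl τ
  | succ N ih =>
    intro σ hσ hle
    set p := σ.trans τ.symm with hp
    by_cases hdes : ∃ i j : Fin n, (j : ℕ) = (i : ℕ) + 1 ∧ p j < p i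
    · obtain ⟨i, j, hij, hd⟩ := hdes
      have hijlt : i < j := by rw [Fin.lt_def]; omega
      -- ρ = σ ∘ swap
      set ρ : Fin n ≃ S := (Equiv.swap i j).trans σ with hρdef
      have hρval : ∀ k, ρ k = σ (Equiv.swap i j k) := fun k => rfl
      have hρlin : IsLinExt ρ := by
        intro a b hab
        by_cases hcase : a = j ∧ b = i
        · rw [hρval, hρval, hcase.1, hcase.2, Equiv.swap_apply_right,
            Equiv.swap_apply_left] at hab
          -- σ i < σ j means τ (p i) < τ (p j), so p i < p j, contra
          have h2 : τ (p i) < τ (p j) := by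
            simpa [hp, Equiv.trans_apply] using hab
          exact absurd (hτ _ _ h2) (not_lt.2 hd.le)
        · have hsab : Equiv.swap i j a < Equiv.swap i j b := by
            rw [hρval, hρval] at hab
            exact hσ _ _ hab
          -- from swap a < swap b and ¬(a = j ∧ b = i) conclude a < b
          by_contra hnab
          rcases (not_lt.1 hnab).lt_or_eq with h | h
          · have : ¬(b = i ∧ a = j) := fun ⟨h1, h2⟩ => hcase ⟨h2, h1⟩
            exact absurd (swap_lt_of_lt hij h this) (not_lt.2 hsab.le)
          · subst h; exact lt_irrefl _ hsab
      have hswapinv : ∀ k, Equiv.swap i j (Equiv.swap i j k) = k := fun k =>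
        Equiv.swap_apply_self i j k
      have hρp : (ρ.trans τ.symm : Fin n → Fin n) = (p : Fin n → Fin n) ∘ Equiv.swap i j := by
        funext k; rfl
      have hltN : (Invs (ρ.trans τ.symm)).card ≤ N := by
        rw [hρp]
        have := invs_swap_lt (p := p) hij hd
        omega
      have htail := ih ρ hρlin hltN
      have hstep := AdjSwapGen.step (g := (ρ.trans τ.symm : Fin n → Fin n)) σ i j hij hρlin
        (fun k => by rw [hρval, hswapinv]) htail
      have heq : ((ρ.trans τ.symm : Fin n ≃ Fin n) : Fin n → Fin n) ∘ (Equiv.swap i j)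
          = ((σ.trans τ.symm : Fin n ≃ Fin n) : Fin n → Fin n) := by
        funext k
        simp [hρdef, Equiv.trans_apply, hswapinv]
      rw [heq] at hstep
      exact hstep
    · -- no descent: p strictly monotone, same as base case
      push_neg at hdes
      have hadj : ∀ i j : Fin n, (j : ℕ) = (i : ℕ) + 1 → p i < p j := by
        intro i j hij
        rcases lt_trichotomy (p i) (p j) with h | h | h
        · exact h
        · exact absurd (p.injective h) (by rw [Fin.ext_iff]; omega)
        · exact absurd h (not_lt.2 (hdes i j hij))
      have hmono : StrictMono p := by
        have hstep : ∀ d (a b : Fin n), (b : ℕ) = (a : ℕ) + d + 1 → p a < p b := by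
          intro d
          induction d with
          | zero => intro a b hb; exact hadj a b (by omega)
          | succ d ihd =>
            intro a b hb
            have hc : (a : ℕ) + d + 1 < n := by omega
            set c : Fin n := ⟨(a : ℕ) + d + 1, hc⟩
            exact (ihd a c rfl).trans (hadj c b (by simp [c]; omega))
        intro a b hab
        rw [Fin.lt_def] at hab
        exact hstep ((b : ℕ) - (a : ℕ) - 1) a b (by omega)
      have hpid : (p : Fin n → Fin n) = id :=
        (StrictMono.range_inj hmono strictMono_id).1 (by
          rw [Set.range_id, Set.range_eq_univ]; exact p.surjective)
      have hστ : σ = τ := by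
        apply Equiv.ext; intro k
        have : p k = k := congrFun hpid k
        have := congrArg τ this
        simpa [hp] using this
      rw [show ((σ.trans τ.symm : Fin n ≃ Fin n) : Fin n → Fin n) = id from hpid, hστ]
      exact AdjSwapGen.refl τ

/-- Every morphism between linear extensions of a finite poset is a composite of
consecutive transpositions that are morphisms between linear extensions. -/
theorem statement7 {S : Type*} [PartialOrder S] [Fintype S]
    (σ τ : Fin (Fintype.card S) ≃ S)
    (hσ : IsLinExt σ) (hτ : IsLinExt τ)
    (f : Fin (Fintype.card S) → Fin (Fintype.card S))
    (hf : ∀ k, τ (f k) = σ k) :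
    AdjSwapGen σ τ f := by
  have hfeq : f = (σ.trans τ.symm : _ → _) := by
    funext k
    have := hf k
    apply τ.injective
    simpa [Equiv.trans_apply] using this
  rw [hfeq]
  exact key_s7 τ hτ _ σ hσ le_rfl
end

section
/- Let K be an augmented directed complex with basis, n ≥ 0, and s ∈ (K_n)⁺ (the positivity submonoid) written in the basis. If s is fork-free, then s is radical, i.e. for all z ∈ (K_n)⁺ with 2z ≤ s one has z = 0. (For n = 0, fork-free means ε(s) = 1 where ε is the augmentation; for n > 0, s is fork-free when for all basis elements x, y with x + y ≤ s, the basis supports of the positive and negative parts of ∂x and ∂y are disjoint: x^ε ∩ y^ε = ∅ for ε ∈ {−,+}.) -/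
/-- The data of an augmented directed complex with basis, presented through its basis:
a graded set of basis elements `P n`, such that the positivity submonoid in degree `n`
is the free commutative monoid `P n →₀ ℕ`, the group `K_n` is `P n →₀ ℤ`, the boundary
of a basis element `x` of positive degree decomposes as `∂x = x⁺ − x⁻` with
`x⁺ = dpos x`, `x⁻ = dneg x` (of disjoint supports), and the augmentation is induced by
`eps` on degree-0 basis elements. -/
structure PreADC where
  P : ℕ → Type
  deceq : ∀ n, DecidableEq (P n)
  dpos : ∀ {n : ℕ}, P (n + 1) → (P n →₀ ℕ)
  dneg : ∀ {n : ℕ}, P (n + 1) → (P n →₀ ℕ)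
  eps : P 0 → ℤ

attribute [instance] PreADC.deceq

namespace PreADC

/-- Inclusion of the positivity submonoid into the group. -/
noncomputable def toZ {α : Type*} (s : α →₀ ℕ) : α →₀ ℤ :=
  s.mapRange (fun m : ℕ => (m : ℤ)) (by simp)

/-- The boundary `∂x = x⁺ − x⁻` of a basis element. -/
noncomputable def bnd (K : PreADC) {n : ℕ} (x : K.P (n + 1)) : K.P n →₀ ℤ :=
  toZ (K.dpos x) - toZ (K.dneg x)

/-- The linear extension of the boundary to the whole group. -/
noncomputable def bndZ (K : PreADC) {n : ℕ} (s : K.P (n + 1) →₀ ℤ) : K.P n →₀ ℤ :=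
  s.sum fun x c => c • K.bnd x

/-- The linear extension of the augmentation. -/
noncomputable def epsZ (K : PreADC) (s : K.P 0 →₀ ℤ) : ℤ :=
  s.sum fun x c => c * K.eps x

/-- `s` is fork-free (positive degree): whenever `x + y ≤ s` for basis elements `x`, `y`,
the supports of `x⁺` and `y⁺` are disjoint, and so are those of `x⁻` and `y⁻`. -/
def ForkFreePos (K : PreADC) {n : ℕ} (s : K.P (n + 1) →₀ ℕ) : Prop :=
  ∀ x y : K.P (n + 1), Finsupp.single x 1 + Finsupp.single y 1 ≤ s →
    (K.dpos x).support ∩ (K.dpos y).support = ∅ ∧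
    (K.dneg x).support ∩ (K.dneg y).support = ∅

/-- `s` is radical: `2z ≤ s` implies `z = 0`. -/
def Radical (K : PreADC) {n : ℕ} (s : K.P n →₀ ℕ) : Prop :=
  ∀ z : K.P n →₀ ℕ, 2 • z ≤ s → z = 0

end PreADC

/-- In an augmented directed complex with basis (chain condition, augmentation condition,
disjointness of `x⁺`, `x⁻`, nonzero boundaries, unital augmentation on the basis),
every fork-free element of the positivity submonoid is radical.  In degree 0,
fork-freeness means that the augmentation takes value 1. -/
theorem statement10 (K : PreADC)
    (hdisj : ∀ (n : ℕ) (x : K.P (n + 1)), Disjoint (K.dpos x).support (K.dneg x).support)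
    (hchain : ∀ (n : ℕ) (x : K.P (n + 2)), K.bndZ (K.bnd x) = 0)
    (haug : ∀ x : K.P 1, K.epsZ (K.bnd x) = 0)
    (hnonzero : ∀ (n : ℕ) (x : K.P (n + 1)), K.dneg x ≠ 0 ∧ K.dpos x ≠ 0)
    (hunital : ∀ x : K.P 0, K.eps x = 1) :
    (∀ s : K.P 0 →₀ ℕ, K.epsZ (PreADC.toZ s) = 1 → K.Radical s) ∧
    (∀ (n : ℕ) (s : K.P (n + 1) →₀ ℕ), K.ForkFreePos s → K.Radical s) := by
  constructor
  · intro s hs z hz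
    by_contra hne
    obtain ⟨x, hx⟩ := Finsupp.ne_iff.mp hne
    simp only [Finsupp.coe_zero, Pi.zero_apply] at hx
    have h2 : 2 * z x ≤ s x := by
      have := hz x
      simpa using this
    have hzx : 1 ≤ z x := Nat.one_le_iff_ne_zero.mpr hx
    have hsx : 2 ≤ s x := le_trans (by omega) h2
    -- compute epsZ (toZ s) = sum of coefficients
    have hsum : K.epsZ (PreADC.toZ s) = s.sum fun _ c => (c : ℤ) := by
      unfold PreADC.epsZ PreADC.toZ
      rw [Finsupp.sum_mapRange_index (by simp)]
      exact Finsupp.sum_congr fun a _ => by rw [hunital a, mul_one]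
    have hxmem : x ∈ s.support := Finsupp.mem_support_iff.mpr (by omega)
    have hge : (s x : ℤ) ≤ s.sum fun _ c => (c : ℤ) := by
      rw [Finsupp.sum]
      exact Finset.single_le_sum (f := fun a => ((s a : ℤ))) (fun i _ => by positivity) hxmem
    rw [hsum] at hs
    omega
  · intro n s hff z hz
    by_contra hne
    obtain ⟨x, hx⟩ := Finsupp.ne_iff.mp hne
    simp only [Finsupp.coe_zero, Pi.zero_apply] at hx
    have hle : Finsupp.single x 1 + Finsupp.single x 1 ≤ s := by
      intro a
      have := hz a
      simp only [Finsupp.coe_add, Pi.add_apply, Finsupp.smul_apply, smul_eq_mul] at this ⊢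
      rcases eq_or_ne a x with rfl | hax
      · simp only [Finsupp.single_eq_same]
        have : 2 * z a ≤ s a := by simpa using hz a
        omega
      · simp [Finsupp.single_eq_of_ne' (Ne.symm hax)]
    obtain ⟨hp, _⟩ := hff x x hle
    rw [Finset.inter_self] at hp
    exact (hnonzero n x).2 (Finsupp.support_eq_empty.mp hp)
end

section
/- Let P be an ω-hypergraph, n ≥ 0, S ⊆ P_{n+1} a finite fork-free set, and U, V ⊆ P_n finite sets such that S moves U to V. Then, in the free abelian group on P_n, ∂(Σ_{x∈S} x) = Σ_{y∈V} y − Σ_{y∈U} y, where ∂x = Σ_{y∈x⁺} y − Σ_{y∈x⁻} y for x ∈ P_{n+1}. -/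
namespace OHG

/-- Fork-freeness for a finite set of `(n+1)`-generators: distinct elements have disjoint
sources and disjoint targets. -/
def ForkFreeSet (P : OHG) {n : ℕ} (S : Finset (P.gen (n + 1))) : Prop :=
  ∀ x ∈ S, ∀ y ∈ S, x ≠ y → P.src x ∩ P.src y = ∅ ∧ P.tgt x ∩ P.tgt y = ∅

end OHG

theorem statement12 (P : OHG) (n : ℕ) (S : Finset (P.gen (n + 1)))
    (U V : Finset (P.gen n))
    (hff : P.ForkFreeSet S) (hmove : P.Moves S U V) :
    (∑ x ∈ S, ((∑ y ∈ P.tgt x, Finsupp.single y (1 : ℤ)) -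
        ∑ y ∈ P.src x, Finsupp.single y (1 : ℤ)))
      = (∑ y ∈ V, Finsupp.single y (1 : ℤ)) - ∑ y ∈ U, Finsupp.single y (1 : ℤ) := by

  classical
  set T := P.setTgt S with hT
  set Sr := P.setSrc S with hSr
  obtain ⟨hV, hU⟩ := hmove
  -- fork-freeness gives pairwise disjointness
  have htgt : (S : Set (P.gen (n+1))).PairwiseDisjoint P.tgt := by
    intro x hx y hy hxy
    simpa [Finset.disjoint_iff_inter_eq_empty] using (hff x hx y hy hxy).2
  have hsrc : (S : Set (P.gen (n+1))).PairwiseDisjoint P.src := by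
    intro x hx y hy hxy
    simpa [Finset.disjoint_iff_inter_eq_empty] using (hff x hx y hy hxy).1
  have e1 : (∑ x ∈ S, ∑ y ∈ P.tgt x, Finsupp.single y (1 : ℤ))
      = ∑ y ∈ T, Finsupp.single y (1 : ℤ) :=
    (Finset.sum_biUnion htgt).symm
  have e2 : (∑ x ∈ S, ∑ y ∈ P.src x, Finsupp.single y (1 : ℤ))
      = ∑ y ∈ Sr, Finsupp.single y (1 : ℤ) :=
    (Finset.sum_biUnion hsrc).symm
  rw [Finset.sum_sub_distrib, e1, e2]
  -- set-theoretic facts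
  have hUmem : ∀ a, a ∈ U ↔ (a ∈ V ∨ a ∈ Sr) ∧ a ∉ T := by
    intro a; rw [hU]; simp [hT, hSr]
  have hVmem : ∀ a, a ∈ V ↔ (a ∈ U ∨ a ∈ T) ∧ a ∉ Sr := by
    intro a; rw [hV]; simp [hT, hSr]
  have hunion : U ∪ T = V ∪ Sr := by
    ext a
    have h1 := hUmem a; have h2 := hVmem a
    simp only [Finset.mem_union] at *
    tauto
  have hUT : U ∩ T = ∅ := by
    ext a; have h1 := hUmem a; simp only [Finset.mem_inter, Finset.notMem_empty]; tauto
  have hVS : V ∩ Sr = ∅ := by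
    ext a; have h2 := hVmem a; simp only [Finset.mem_inter, Finset.notMem_empty]; tauto
  have key : (∑ y ∈ U, Finsupp.single y (1 : ℤ)) + ∑ y ∈ T, Finsupp.single y (1 : ℤ)
      = (∑ y ∈ V, Finsupp.single y (1 : ℤ)) + ∑ y ∈ Sr, Finsupp.single y (1 : ℤ) := by
    calc (∑ y ∈ U, Finsupp.single y (1 : ℤ)) + ∑ y ∈ T, Finsupp.single y (1 : ℤ)
        = (∑ y ∈ U ∪ T, Finsupp.single y (1 : ℤ)) + ∑ y ∈ U ∩ T, Finsupp.single y (1 : ℤ) :=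
          Finset.sum_union_inter.symm
      _ = (∑ y ∈ V ∪ Sr, Finsupp.single y (1 : ℤ)) + ∑ y ∈ V ∩ Sr, Finsupp.single y (1 : ℤ) := by
          rw [hunion, hUT, hVS]
      _ = (∑ y ∈ V, Finsupp.single y (1 : ℤ)) + ∑ y ∈ Sr, Finsupp.single y (1 : ℤ) :=
          Finset.sum_union_inter
  exact sub_eq_sub_iff_add_eq_add.mpr (by rw [add_comm]; exact key)
end

section
/- Let P be an ω-hypergraph satisfying axioms (F0) non-emptiness, (F1) acyclicity, and (F2) relevance. If P satisfies the computable segment axiom (F3'): for all n > 0, x ∈ P_n, and k < n, it is not the case that ⟨x⟩_{k,+} ⊴ ⟨x⟩_{k,−} (where ⊴ is the reflexive transitive closure of the relation y ⊴₁ z holding when there is w ∈ P_{k+1} with y ∈ w⁻ and z ∈ w⁺), then P satisfies the segment axiom (F3): every generator x satisfies the segment condition. -/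
namespace OHG

/-- Fork-freeness of a set of `n`-generators. -/
def ForkFree (P : OHG) : ∀ n : ℕ, Finset (P.gen n) → Prop
  | 0, U => U.card = 1
  | _ + 1, U => ∀ x ∈ U, ∀ y ∈ U, x ≠ y →
      P.src x ∩ P.src y = ∅ ∧ P.tgt x ∩ P.tgt y = ∅

/-- An `n`-pre-cell: finite sets `X_{i,−}`, `X_{i,+}` of `i`-generators for `i ≤ n`,
with a single top-dimensional set `X_n = X_{n,−} = X_{n,+}`. -/
structure PreCell (P : OHG) (n : ℕ) where
  neg : ∀ i : ℕ, i ≤ n → Finset (P.gen i)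
  pos : ∀ i : ℕ, i ≤ n → Finset (P.gen i)
  top_eq : neg n le_rfl = pos n le_rfl

/-- The top-dimensional set `X_n` of a pre-cell. -/
def PreCell.top {P : OHG} {n : ℕ} (X : P.PreCell n) : Finset (P.gen n) :=
  X.neg n le_rfl

/-- `X` is an `n`-cell: all its sets are fork-free and each `X_{i+1,ε}` moves
`X_{i,−}` to `X_{i,+}`. -/
def IsCell (P : OHG) {n : ℕ} (X : P.PreCell n) : Prop :=
  (∀ (i : ℕ) (h : i ≤ n), P.ForkFree i (X.neg i h) ∧ P.ForkFree i (X.pos i h)) ∧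
  (∀ (i : ℕ) (h : i + 1 ≤ n),
    P.Moves (X.neg (i + 1) h) (X.neg i (by omega)) (X.pos i (by omega)) ∧
    P.Moves (X.pos (i + 1) h) (X.neg i (by omega)) (X.pos i (by omega)))

/-- Transport of a set of generators along an equality of dimensions. -/
def castSet (P : OHG) {i j : ℕ} (e : i = j) (S : Finset (P.gen i)) : Finset (P.gen j) :=
  e ▸ S

/-- One step of the atom boundary: `S∓` for `ε = −`, `S±` for `ε = +`. -/
def bd (P : OHG) (ε : Bool) {i : ℕ} (S : Finset (P.gen (i + 1))) : Finset (P.gen i) :=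
  if ε then P.pm S else P.mp S

/-- The `k`-fold iterated atom boundary. -/
def iterBd (P : OHG) (ε : Bool) : ∀ (k : ℕ) {i : ℕ}, Finset (P.gen (i + k)) → Finset (P.gen i)
  | 0, _, S => S
  | k + 1, _, S => iterBd P ε k (P.bd ε S)

/-- `⟨x⟩_{i,ε}`, the `(i,ε)`-component of the atom of the generator `x`. -/
def atomSide (P : OHG) {n : ℕ} (x : P.gen n) (ε : Bool) (i : ℕ) (_h : i ≤ n) :
    Finset (P.gen i) :=
  P.iterBd ε (n - i) (P.castSet (by omega : n = i + (n - i)) {x})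

theorem iterBd_eq_of_zero (P : OHG) (ε : Bool) {k i : ℕ} (hk : k = 0)
    (S : Finset (P.gen (i + k))) :
    P.iterBd ε k S = P.castSet (by omega : i + k = i) S := by
  subst hk; rfl

/-- The atom `⟨x⟩` of a generator `x`. -/
def atom (P : OHG) {n : ℕ} (x : P.gen n) : P.PreCell n where
  neg := fun i h => P.atomSide x false i h
  pos := fun i h => P.atomSide x true i h
  top_eq := by
    simp only [OHG.atomSide]
    rw [P.iterBd_eq_of_zero false (Nat.sub_self n), P.iterBd_eq_of_zero true (Nat.sub_self n)]

/-- `x ◁¹_U y`. -/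
def tlone (P : OHG) {n : ℕ} (U : Finset (P.gen (n + 1))) (x y : P.gen (n + 1)) : Prop :=
  x ∈ U ∧ y ∈ U ∧ (P.tgt x ∩ P.src y).Nonempty

/-- `x ◁_U y`, the transitive closure of `◁¹_U`. -/
def tl (P : OHG) {n : ℕ} (U : Finset (P.gen (n + 1))) :
    P.gen (n + 1) → P.gen (n + 1) → Prop :=
  Relation.TransGen (P.tlone U)

/-- `S ◁_U T` for subsets. -/
def tlSet (P : OHG) {n : ℕ} (U S T : Finset (P.gen (n + 1))) : Prop :=
  ∃ s ∈ S, ∃ t ∈ T, P.tl U s t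

/-- Axiom (F1): acyclicity of `◁` on each `P_n`. -/
def Acyclic (P : OHG) : Prop :=
  ∀ (n : ℕ) (x : P.gen (n + 1)),
    ¬ Relation.TransGen (fun a b : P.gen (n + 1) => (P.tgt a ∩ P.src b).Nonempty) x x

/-- Axiom (F0): non-emptiness of sources and targets. -/
def NonEmptySrcTgt (P : OHG) : Prop :=
  ∀ (n : ℕ) (x : P.gen (n + 1)), (P.src x).Nonempty ∧ (P.tgt x).Nonempty

/-- Axiom (F2): every atom is a cell. -/
def Relevant (P : OHG) : Prop := ∀ (n : ℕ) (x : P.gen n), P.IsCell (P.atom x)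

/-- `V` is a segment for `◁_U`. -/
def IsSegment (P : OHG) {n : ℕ} (U V : Finset (P.gen (n + 1))) : Prop :=
  ∀ x y z : P.gen (n + 1), x ∈ V → z ∈ V → P.tl U x y → P.tl U y z → y ∈ V

/-- The segment condition for a generator `x`: for every lower-dimensional cell `X`
containing `⟨x⟩_{n,ε}` in its top set, `⟨x⟩_{n,ε}` is a segment for `◁_{X_n}`. -/
def SegmentCond (P : OHG) {m : ℕ} (x : P.gen m) : Prop :=
  ∀ (n : ℕ) (h : n + 1 < m) (X : P.PreCell (n + 1)), P.IsCell X →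
    ∀ ε : Bool, P.atomSide x ε (n + 1) (le_of_lt h) ⊆ X.top →
      P.IsSegment X.top (P.atomSide x ε (n + 1) (le_of_lt h))

/-- `y ⊴₁ z` : some generator has `y` in its source and `z` in its target. -/
def jtlone (P : OHG) {k : ℕ} (y z : P.gen k) : Prop :=
  ∃ w : P.gen (k + 1), y ∈ P.src w ∧ z ∈ P.tgt w

/-- `⊴`, the reflexive transitive closure of `⊴₁`. -/
def jtl (P : OHG) {k : ℕ} : P.gen k → P.gen k → Prop :=
  Relation.ReflTransGen fun a b => P.jtlone a b

/-- `S ⊴ T` for subsets. -/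
def jtlSet (P : OHG) {k : ℕ} (S T : Finset (P.gen k)) : Prop :=
  ∃ s ∈ S, ∃ t ∈ T, P.jtl s t

/-- `x` and `y` are in torsion with respect to the `(k+1)`-cell `Z`. -/
def InTorsion (P : OHG) {k i j : ℕ} (hik : k + 1 < i) (hjk : k + 1 < j)
    (x : P.gen i) (y : P.gen j) (Z : P.PreCell (k + 1)) : Prop :=
  P.atomSide x true (k + 1) (le_of_lt hik) ⊆ Z.top ∧
  P.atomSide y false (k + 1) (le_of_lt hjk) ⊆ Z.top ∧
  P.atomSide x true (k + 1) (le_of_lt hik) ∩ P.atomSide y false (k + 1) (le_of_lt hjk) = ∅ ∧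
  P.tlSet Z.top (P.atomSide x true (k + 1) (le_of_lt hik))
    (P.atomSide y false (k + 1) (le_of_lt hjk)) ∧
  P.tlSet Z.top (P.atomSide y false (k + 1) (le_of_lt hjk))
    (P.atomSide x true (k + 1) (le_of_lt hik))

/-- The gluing of the `n`-cell `X` on the set `G` of `(n+1)`-generators. -/
def gluing (P : OHG) {n : ℕ} (X : P.PreCell n) (G : Finset (P.gen (n + 1))) :
    P.PreCell (n + 1) where
  neg := fun i _h =>
    if h' : i ≤ n then X.neg i h' else P.castSet (by omega : n + 1 = i) G
  pos := fun i _h =>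
    if h' : i ≤ n then
      (if h'' : i = n then
        P.castSet h''.symm ((X.top ∪ P.setTgt G) \ P.setSrc G)
      else X.pos i h')
    else P.castSet (by omega : n + 1 = i) G
  top_eq := by
    have hn : ¬ (n + 1 ≤ n) := by omega
    beta_reduce
    rw [dif_neg hn, dif_neg hn]

/-- The activation of `G` on `X`: the `n`-target of the gluing. -/
def activation (P : OHG) {n : ℕ} (X : P.PreCell n) (G : Finset (P.gen (n + 1))) :
    P.PreCell n where
  neg := fun i h =>
    if h'' : i = n then P.castSet h''.symm ((X.top ∪ P.setTgt G) \ P.setSrc G)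
    else X.neg i h
  pos := fun i h =>
    if h'' : i = n then P.castSet h''.symm ((X.top ∪ P.setTgt G) \ P.setSrc G)
    else X.pos i h
  top_eq := by beta_reduce; rw [dif_pos rfl, dif_pos rfl]

/-- The `i`-composite of two `n`-pre-cells (`i < n`). -/
def compAt (P : OHG) {n : ℕ} (i : ℕ) (hlt : i < n) (X Y : P.PreCell n) : P.PreCell n where
  neg := fun j h => if i < j then X.neg j h ∪ Y.neg j h else X.neg j h
  pos := fun j h =>
    if i < j then X.pos j h ∪ Y.pos j h else if j = i then Y.pos j h else X.pos j h
  top_eq := by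
    simp only [if_pos hlt]
    rw [X.top_eq, Y.top_eq]

/-- `X` and `Y` are `i`-composable: the `i`-target of `X` is the `i`-source of `Y`. -/
def ComposableAt (P : OHG) {n : ℕ} (i : ℕ) (hi : i ≤ n) (X Y : P.PreCell n) : Prop :=
  X.pos i hi = Y.neg i hi ∧
  ∀ j (_hj : j < i),
    X.neg j (by omega) = Y.neg j (by omega) ∧ X.pos j (by omega) = Y.pos j (by omega)

/-- The closure relation `⊲*` between generators of possibly different dimensions:
`Below P x y` when `x` can be reached from `y` by a downward chain of
source/target memberships. -/
inductive Below (P : OHG) : ∀ {a b : ℕ}, P.gen a → P.gen b → Prop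
  | refl {a : ℕ} (x : P.gen a) : Below P x x
  | step {a b : ℕ} {x : P.gen a} {y : P.gen b} {z : P.gen (b + 1)} :
      Below P x y → (y ∈ P.src z ∨ y ∈ P.tgt z) → Below P x z

/-- `g` is maximal in `∪X`: every element of `∪X` lying above `g` for the closure
relation is `g` itself. -/
def MaximalIn (P : OHG) {n : ℕ} (X : P.PreCell n) {m : ℕ} (_hm : m ≤ n) (g : P.gen m) :
    Prop :=
  ∀ (b : ℕ) (hb : b ≤ n) (y : P.gen b),
    (y ∈ X.neg b hb ∨ y ∈ X.pos b hb) → Below P g y → HEq g y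

/-- The `i`-th component of the rank of an `n`-pre-cell:
`|X_{i,−} ∩ X_{i,+}|` for `i < n`, and `|X_n|` for `i = n`. -/
def rank (P : OHG) {n : ℕ} (X : P.PreCell n) (i : ℕ) (h : i ≤ n) : ℕ :=
  if i = n then X.top.card else (X.neg i h ∩ X.pos i h).card

/-- The lexicographic order on ranks, where later coordinates dominate. -/
def rankLt (P : OHG) {n : ℕ} (X Y : P.PreCell n) : Prop :=
  ∃ (k : ℕ) (hk : k ≤ n), 1 ≤ k ∧ P.rank X k hk < P.rank Y k hk ∧
    ∀ (i : ℕ) (hi : i ≤ n), k < i → P.rank X i hi = P.rank Y i hi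

/-- The identity `(n+1)`-pre-cell on an `n`-pre-cell. -/
def unitCell (P : OHG) {n : ℕ} (X : P.PreCell n) : P.PreCell (n + 1) where
  neg := fun i _h =>
    if h' : i ≤ n then X.neg i h'
    else P.castSet (by omega : n + 1 = i) (∅ : Finset (P.gen (n + 1)))
  pos := fun i _h =>
    if h' : i ≤ n then X.pos i h'
    else P.castSet (by omega : n + 1 = i) (∅ : Finset (P.gen (n + 1)))
  top_eq := by
    have hn : ¬ (n + 1 ≤ n) := by omega
    beta_reduce
    rw [dif_neg hn, dif_neg hn]

/-- Iterated identities. -/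
def unitIter (P : OHG) : ∀ (d : ℕ) {m : ℕ}, P.PreCell m → P.PreCell (m + d)
  | 0, _, X => X
  | d + 1, _, X => P.unitCell (unitIter P d X)

/-- Transport of a pre-cell along an equality of dimensions. -/
def castCell (P : OHG) {a b : ℕ} (e : a = b) (X : P.PreCell a) : P.PreCell b :=
  e ▸ X

/-- An `a`-pre-cell regarded as a `b`-pre-cell (`a ≤ b`) via iterated identities. -/
def liftTo (P : OHG) {a b : ℕ} (h : a ≤ b) (X : P.PreCell a) : P.PreCell b :=
  P.castCell (by omega : a + (b - a) = b) (P.unitIter (b - a) X)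

/-- An `n`-context: for each `j < n`, a pair of `(j+1)`-pre-cells used to whisker at
level `j`. -/
structure Context (P : OHG) (n : ℕ) where
  left : ∀ j : ℕ, j < n → P.PreCell (j + 1)
  right : ∀ j : ℕ, j < n → P.PreCell (j + 1)

/-- Partial evaluation of a context on an atom: whiskering of `⟨x⟩` by the context cells
of dimensions `≤ k`. -/
def evalAux (P : OHG) {n : ℕ} (E : P.Context n) (x : P.gen (n + 1)) :
    (k : ℕ) → k ≤ n → P.PreCell (n + 1)
  | 0, _ => P.atom x
  | k + 1, h =>
      P.compAt k (by omega)
        (P.compAt k (by omega)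
          (P.liftTo (by omega) (E.left k h))
          (evalAux P E x k (by omega)))
        (P.liftTo (by omega) (E.right k h))

/-- The evaluation `E[x]` of an `n`-context `E` on the atom of the `(n+1)`-generator
`x`:  `E[x] = x_n ∘_{n−1} (⋯ (x_1 ∘_0 ⟨x⟩ ∘_0 x'_1) ⋯) ∘_{n−1} x'_n`. -/
def evalCtx (P : OHG) {n : ℕ} (E : P.Context n) (x : P.gen (n + 1)) : P.PreCell (n + 1) :=
  P.evalAux E x n le_rfl

end OHG

namespace OHG

/-- If a `◁`-chain starts in `V` and ends outside `V`, it exits `V` at some step. -/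
lemma exit_lemma (P : OHG) {n : ℕ} {U V : Finset (P.gen (n + 1))} {a y : P.gen (n + 1)}
    (h : P.tl U a y) (ha : a ∈ V) :
    y ∉ V → ∃ u ∈ V, ∃ w, w ∉ V ∧ P.tlone U u w ∧ Relation.ReflTransGen (P.tlone U) w y := by
  induction h with
  | single h1 => exact fun hy => ⟨a, ha, _, hy, h1, Relation.ReflTransGen.refl⟩
  | @tail b c hab hbc ih =>
    intro hy
    by_cases hb : b ∈ V
    · exact ⟨b, hb, c, hy, hbc, Relation.ReflTransGen.refl⟩
    · obtain ⟨u, hu, w, hw, h1, h2⟩ := ih hb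
      exact ⟨u, hu, w, hw, h1, h2.tail hbc⟩

/-- If a `◁`-chain starts outside `V` and ends in `V`, it enters `V` at some step. -/
lemma entry_lemma (P : OHG) {n : ℕ} {U V : Finset (P.gen (n + 1))} {y c : P.gen (n + 1)}
    (h : P.tl U y c) (hy : y ∉ V) :
    c ∈ V → ∃ w', w' ∉ V ∧ ∃ v' ∈ V, P.tlone U w' v' ∧
      Relation.ReflTransGen (P.tlone U) y w' := by
  induction h with
  | single h1 => exact fun hc => ⟨y, hy, _, hc, h1, Relation.ReflTransGen.refl⟩
  | @tail b c' hab hbc ih =>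
    intro hc
    by_cases hb : b ∈ V
    · exact ih hb
    · exact ⟨b, hb, c', hc, hbc, hab.to_reflTransGen⟩

/-- A `◁`-chain from `w` to `w'` transports `g ∈ w⁻` to `g' ∈ w'⁺` along `⊴`. -/
lemma chain_jtl (P : OHG) {n : ℕ} {U : Finset (P.gen (n + 1))} {w w' : P.gen (n + 1)}
    (h : Relation.ReflTransGen (P.tlone U) w w') :
    ∀ {g g' : P.gen n}, g ∈ P.src w → g' ∈ P.tgt w' → P.jtl g g' := by
  induction h with
  | refl => exact fun hg hg' => Relation.ReflTransGen.single ⟨w, hg, hg'⟩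
  | @tail b c hwb hbc ih =>
    intro g g' hg hg'
    obtain ⟨t, ht⟩ := hbc.2.2
    rw [Finset.mem_inter] at ht
    exact (ih hg ht.1).tail ⟨c, ht.2, hg'⟩

end OHG

/-- If an ω-hypergraph satisfies (F0) non-emptiness, (F1) acyclicity, (F2) relevance and
the computable segment axiom (F3'), then it satisfies the segment axiom (F3): every
generator satisfies the segment condition. -/
theorem statement13 (P : OHG)
    (hF0 : P.NonEmptySrcTgt) (hF1 : P.Acyclic) (hF2 : P.Relevant)
    (hF3' : ∀ (n : ℕ) (x : P.gen n) (k : ℕ) (hk : k < n),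
      ¬ P.jtlSet (P.atomSide x true k (le_of_lt hk)) (P.atomSide x false k (le_of_lt hk))) :
    ∀ (m : ℕ) (x : P.gen m), P.SegmentCond x := by
  intro m x n hn X hX ε hsub
  intro a y c haV hcV hay hyc
  by_contra hyV
  -- the atom of x is a cell, so V moves ⟨x⟩_{n,−} to ⟨x⟩_{n,+}
  have hMove : P.Moves (P.atomSide x ε (n + 1) (le_of_lt hn))
      (P.atomSide x false n (by omega)) (P.atomSide x true n (by omega)) := by
    have h2 := (hF2 m x).2 n (by omega)
    cases ε
    · exact h2.1
    · exact h2.2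
  have hff : P.ForkFree (n + 1) X.top := (hX.1 (n + 1) le_rfl).1
  obtain ⟨u, huV, w, hwV, huw, hwy⟩ := P.exit_lemma hay haV hyV
  obtain ⟨w', hw'V, v', hv'V, hw'v', hyw'⟩ := P.entry_lemma hyc hyV hcV
  obtain ⟨g, hg⟩ := huw.2.2
  obtain ⟨g', hg'⟩ := hw'v'.2.2
  rw [Finset.mem_inter] at hg hg'
  -- g ∈ ⟨x⟩_{n,+}
  have hgB : g ∈ P.atomSide x true n (by omega : n ≤ m) := by
    rw [hMove.1]
    refine Finset.mem_sdiff.mpr ⟨Finset.mem_union_right _ ?_, ?_⟩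
    · exact Finset.mem_biUnion.mpr ⟨u, huV, hg.1⟩
    · intro hgS
      obtain ⟨v, hvV, hgv⟩ := Finset.mem_biUnion.mp hgS
      have hwv : w ≠ v := fun e => hwV (e ▸ hvV)
      have hdisj := (hff w huw.2.1 v (hsub hvV) hwv).1
      have : g ∈ P.src w ∩ P.src v := Finset.mem_inter.mpr ⟨hg.2, hgv⟩
      rw [hdisj] at this
      exact absurd this (Finset.notMem_empty g)
  -- g' ∈ ⟨x⟩_{n,−}
  have hg'A : g' ∈ P.atomSide x false n (by omega : n ≤ m) := by
    rw [hMove.2]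
    refine Finset.mem_sdiff.mpr ⟨Finset.mem_union_right _ ?_, ?_⟩
    · exact Finset.mem_biUnion.mpr ⟨v', hv'V, hg'.2⟩
    · intro hgT
      obtain ⟨v, hvV, hgv⟩ := Finset.mem_biUnion.mp hgT
      have hwv : w' ≠ v := fun e => hw'V (e ▸ hvV)
      have hdisj := (hff w' hw'v'.1 v (hsub hvV) hwv).2
      have : g' ∈ P.tgt w' ∩ P.tgt v := Finset.mem_inter.mpr ⟨hg'.1, hgv⟩
      rw [hdisj] at this
      exact absurd this (Finset.notMem_empty g')
  have hchain : Relation.ReflTransGen (P.tlone X.top) w w' := hwy.trans hyw'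
  have hjtl : P.jtl g g' := P.chain_jtl hchain hg.2 hg'.1
  exact hF3' m x n (by omega) ⟨g, hgB, g', hg'A, hjtl⟩
end

section
/- Let P be an ω-hypergraph satisfying (F0), (F1), (F2). If P satisfies the computable torsion-freeness axiom (F4'): for all n > 0, i > n, j > n, x ∈ P_i, y ∈ P_j with ⟨x⟩_{n,+} ∩ ⟨y⟩_{n,−} = ∅, at most one of ⟨x⟩_{n−1,+} ⊴ ⟨y⟩_{n−1,−} and ⟨y⟩_{n−1,+} ⊴ ⟨x⟩_{n−1,−} holds (⊴ being the reflexive transitive closure of z ⊴₁ w iff there is u ∈ P_n with z ∈ u⁻ and w ∈ u⁺), then P satisfies torsion-freeness (F4): no two generators x, y are in torsion with respect to any cell Z. -/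
namespace OHG

variable {P : OHG}

lemma aux_src_eq {k : ℕ} {W : Finset (P.gen (k + 1))} (hW : P.ForkFree (k + 1) W)
    {v w : P.gen (k + 1)} (hv : v ∈ W) (hw : w ∈ W) {c : P.gen k}
    (hcv : c ∈ P.src v) (hcw : c ∈ P.src w) : v = w := by
  by_contra hne
  have h1 := (hW v hv w hw hne).1
  have h2 : c ∈ P.src v ∩ P.src w := Finset.mem_inter.mpr ⟨hcv, hcw⟩
  rw [h1] at h2
  exact absurd h2 (Finset.notMem_empty c)

lemma aux_tgt_eq {k : ℕ} {W : Finset (P.gen (k + 1))} (hW : P.ForkFree (k + 1) W)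
    {v w : P.gen (k + 1)} (hv : v ∈ W) (hw : w ∈ W) {c : P.gen k}
    (hcv : c ∈ P.tgt v) (hcw : c ∈ P.tgt w) : v = w := by
  by_contra hne
  have h1 := (hW v hv w hw hne).2
  have h2 : c ∈ P.tgt v ∩ P.tgt w := Finset.mem_inter.mpr ⟨hcv, hcw⟩
  rw [h1] at h2
  exact absurd h2 (Finset.notMem_empty c)

lemma jtl_of_chain {k : ℕ} {W : Finset (P.gen (k + 1))} {v u : P.gen (k + 1)}
    (h : Relation.ReflTransGen (P.tlone W) v u) :
    ∀ {c : P.gen k}, c ∈ P.src v → ∀ {c' : P.gen k}, c' ∈ P.tgt u → P.jtl c c' := by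
  induction h using Relation.ReflTransGen.head_induction_on with
  | refl =>
      intro c hc c' hc'
      exact Relation.ReflTransGen.single ⟨u, hc, hc'⟩
  | head hstep _ ih =>
      intro c hc c' hc'
      obtain ⟨_, _, d, hd⟩ := hstep
      obtain ⟨hd1, hd2⟩ := Finset.mem_inter.mp hd
      exact Relation.ReflTransGen.head ⟨_, hc, hd1⟩ (ih hd2 hc')

/-- Finding the last exit of a `◁`-chain from a set `A` containing its start. -/
lemma exists_exit {k : ℕ} {W A : Finset (P.gen (k + 1))} {s t : P.gen (k + 1)}
    (h : Relation.TransGen (P.tlone W) s t) (hs : s ∈ A) : t ∉ A →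
    ∃ u v c, u ∈ W ∧ u ∈ A ∧ v ∈ W ∧ v ∉ A ∧ c ∈ P.tgt u ∧ c ∈ P.src v ∧
      Relation.ReflTransGen (P.tlone W) v t := by
  induction h with
  | single hst =>
      intro ht
      obtain ⟨h1, h2, d, hd⟩ := hst
      obtain ⟨hd1, hd2⟩ := Finset.mem_inter.mp hd
      exact ⟨s, _, d, h1, hs, h2, ht, hd1, hd2, Relation.ReflTransGen.refl⟩
  | tail hsb hbt ih =>
      rename_i b tt
      intro ht
      obtain ⟨h1, h2, d, hd⟩ := hbt
      obtain ⟨hd1, hd2⟩ := Finset.mem_inter.mp hd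
      by_cases hb : b ∈ A
      · exact ⟨b, tt, d, h1, hb, h2, ht, hd1, hd2, Relation.ReflTransGen.refl⟩
      · obtain ⟨u, v, c, c1, c2, c3, c4, c5, c6, c7⟩ := ih hb
        exact ⟨u, v, c, c1, c2, c3, c4, c5, c6, c7.tail ⟨h1, h2, d, hd⟩⟩

/-- Finding the first entry of a `◁`-chain into a set `B` containing its end. -/
lemma exists_entry {k : ℕ} {W B : Finset (P.gen (k + 1))} {s t : P.gen (k + 1)}
    (h : Relation.TransGen (P.tlone W) s t) (hs : s ∉ B) (ht : t ∈ B) :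
    ∃ u v c, u ∈ W ∧ u ∉ B ∧ v ∈ W ∧ v ∈ B ∧ c ∈ P.tgt u ∧ c ∈ P.src v ∧
      Relation.ReflTransGen (P.tlone W) s u := by
  induction h using Relation.TransGen.head_induction_on with
  | single hst =>
      rename_i a
      obtain ⟨h1, h2, d, hd⟩ := hst
      obtain ⟨hd1, hd2⟩ := Finset.mem_inter.mp hd
      exact ⟨a, t, d, h1, hs, h2, ht, hd1, hd2, Relation.ReflTransGen.refl⟩
  | head hstep hrest ih =>
      rename_i a m
      obtain ⟨h1, h2, d, hd⟩ := hstep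
      obtain ⟨hd1, hd2⟩ := Finset.mem_inter.mp hd
      by_cases hm : m ∈ B
      · exact ⟨a, m, d, h1, hs, h2, hm, hd1, hd2, Relation.ReflTransGen.refl⟩
      · obtain ⟨u, v, c, c1, c2, c3, c4, c5, c6, c7⟩ := ih hm
        exact ⟨u, v, c, c1, c2, c3, c4, c5, c6,
          Relation.ReflTransGen.head ⟨h1, h2, d, hd⟩ c7⟩

/-- Main chain lemma: a `◁_W`-chain from `A` to `B` (disjoint subsets of a fork-free `W`)
yields a `⊴`-chain from `A±` to `B∓`. -/
lemma chain_jtl_s14 {k : ℕ} {W A B : Finset (P.gen (k + 1))} (hW : P.ForkFree (k + 1) W)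
    (hA : A ⊆ W) (hB : B ⊆ W) (hdisj : A ∩ B = ∅)
    {s t : P.gen (k + 1)} (hs : s ∈ A) (ht : t ∈ B) (h : P.tl W s t) :
    ∃ a ∈ P.pm A, ∃ b ∈ P.mp B, P.jtl a b := by
  have hnotboth : ∀ z : P.gen (k + 1), z ∈ A → z ∈ B → False := by
    intro z h1 h2
    have : z ∈ A ∩ B := Finset.mem_inter.mpr ⟨h1, h2⟩
    rw [hdisj] at this
    exact absurd this (Finset.notMem_empty z)
  obtain ⟨u₁, v₁, c₁, hu₁W, hu₁A, hv₁W, hv₁A, hc₁t, hc₁s, hchain⟩ :=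
    exists_exit h hs (fun htA => hnotboth t htA ht)
  -- c₁ ∈ pm A
  have hc₁pm : c₁ ∈ P.pm A := by
    rw [OHG.pm, Finset.mem_sdiff]
    constructor
    · exact Finset.mem_biUnion.mpr ⟨u₁, hu₁A, hc₁t⟩
    · intro hmem
      obtain ⟨w, hwA, hcw⟩ := Finset.mem_biUnion.mp hmem
      exact hv₁A (aux_src_eq hW hv₁W (hA hwA) hc₁s hcw ▸ hwA)
  by_cases hv₁B : v₁ ∈ B
  · -- c₁ is also in mp B
    have hc₁mp : c₁ ∈ P.mp B := by
      rw [OHG.mp, Finset.mem_sdiff]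
      constructor
      · exact Finset.mem_biUnion.mpr ⟨v₁, hv₁B, hc₁s⟩
      · intro hmem
        obtain ⟨w, hwB, hcw⟩ := Finset.mem_biUnion.mp hmem
        exact hnotboth u₁ hu₁A (aux_tgt_eq hW (hB hwB) hu₁W hcw hc₁t ▸ hwB)
    exact ⟨c₁, hc₁pm, c₁, hc₁mp, Relation.ReflTransGen.refl⟩
  · -- the chain from v₁ to t must enter B
    have htrans : Relation.TransGen (P.tlone W) v₁ t := by
      rcases Relation.ReflTransGen.cases_head hchain with heq | ⟨m, hm1, hm2⟩
      · exact absurd (heq ▸ ht) hv₁B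
      · exact Relation.TransGen.head' hm1 hm2
    obtain ⟨u₂, v₂, c₂, hu₂W, hu₂B, hv₂W, hv₂B, hc₂t, hc₂s, hchain₂⟩ :=
      exists_entry htrans hv₁B ht
    have hc₂mp : c₂ ∈ P.mp B := by
      rw [OHG.mp, Finset.mem_sdiff]
      constructor
      · exact Finset.mem_biUnion.mpr ⟨v₂, hv₂B, hc₂s⟩
      · intro hmem
        obtain ⟨w, hwB, hcw⟩ := Finset.mem_biUnion.mp hmem
        exact hu₂B (aux_tgt_eq hW (hB hwB) hu₂W hcw hc₂t ▸ hwB)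
    exact ⟨c₁, hc₁pm, c₂, hc₂mp, jtl_of_chain hchain₂ hc₁s hc₂t⟩

lemma pm_subset_of_moves {n : ℕ} {S : Finset (P.gen (n + 1))} {U V : Finset (P.gen n)}
    (h : P.Moves S U V) : P.pm S ⊆ V := by
  intro x hx
  rw [OHG.pm, Finset.mem_sdiff] at hx
  rw [h.1, Finset.mem_sdiff, Finset.mem_union]
  exact ⟨Or.inr hx.1, hx.2⟩

lemma mp_subset_of_moves {n : ℕ} {S : Finset (P.gen (n + 1))} {U V : Finset (P.gen n)}
    (h : P.Moves S U V) : P.mp S ⊆ U := by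
  intro x hx
  rw [OHG.mp, Finset.mem_sdiff] at hx
  rw [h.2, Finset.mem_sdiff, Finset.mem_union]
  exact ⟨Or.inr hx.1, hx.2⟩

end OHG

/-- If an ω-hypergraph satisfies (F0), (F1), (F2) and the computable torsion-freeness
axiom (F4'), then it satisfies torsion-freeness (F4): no two generators are in torsion
with respect to any cell. -/
theorem statement14 (P : OHG)
    (hF0 : P.NonEmptySrcTgt) (hF1 : P.Acyclic) (hF2 : P.Relevant)
    (hF4' : ∀ (k i j : ℕ) (hik : k + 1 < i) (hjk : k + 1 < j)
      (x : P.gen i) (y : P.gen j),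
      P.atomSide x true (k + 1) (le_of_lt hik) ∩
        P.atomSide y false (k + 1) (le_of_lt hjk) = ∅ →
      ¬ (P.jtlSet (P.atomSide x true k (by omega)) (P.atomSide y false k (by omega)) ∧
         P.jtlSet (P.atomSide y true k (by omega)) (P.atomSide x false k (by omega)))) :
    ∀ (k i j : ℕ) (hik : k + 1 < i) (hjk : k + 1 < j)
      (x : P.gen i) (y : P.gen j) (Z : P.PreCell (k + 1)),
      P.IsCell Z → ¬ P.InTorsion hik hjk x y Z := by
  intro k i j hik hjk x y Z hZ htor
  obtain ⟨hxZ, hyZ, hdisj, h1, h2⟩ := htor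
  have hW : P.ForkFree (k + 1) Z.top := (hZ.1 (k + 1) le_rfl).1
  obtain ⟨s, hs, t, ht, hst⟩ := h1
  obtain ⟨t', ht', s', hs', hts⟩ := h2
  have hdisj' : P.atomSide y false (k + 1) (le_of_lt hjk) ∩
      P.atomSide x true (k + 1) (le_of_lt hik) = ∅ := by
    rw [Finset.inter_comm]; exact hdisj
  obtain ⟨a1, ha1, b1, hb1, hj1⟩ := OHG.chain_jtl_s14 hW hxZ hyZ hdisj hs ht hst
  obtain ⟨a2, ha2, b2, hb2, hj2⟩ := OHG.chain_jtl_s14 hW hyZ hxZ hdisj' ht' hs' hts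
  -- atoms are cells: transfer pm/mp to level-k atom sides
  have hcx := hF2 i x
  have hcy := hF2 j y
  have hxk : k + 1 ≤ i := by omega
  have hyk : k + 1 ≤ j := by omega
  have mvx := hcx.2 k hxk
  have mvy := hcy.2 k hyk
  have hA1 : a1 ∈ P.atomSide x true k (by omega) :=
    OHG.pm_subset_of_moves mvx.2 ha1
  have hB1 : b1 ∈ P.atomSide y false k (by omega) :=
    OHG.mp_subset_of_moves mvy.1 hb1
  have hA2 : a2 ∈ P.atomSide y true k (by omega) :=
    OHG.pm_subset_of_moves mvy.1 ha2
  have hB2 : b2 ∈ P.atomSide x false k (by omega) :=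
    OHG.mp_subset_of_moves mvx.2 hb2
  exact hF4' k i j hik hjk x y hdisj
    ⟨⟨a1, hA1, b1, hB1, hj1⟩, ⟨a2, hA2, b2, hB2, hj2⟩⟩
end

section
/- Let P be a generalized parity complex (an ω-hypergraph satisfying (F0)–(F3)), n ∈ ℕ, X an n-cell of P, and G ⊆ P_{n+1} a finite fork-free set glueable on X (i.e. G⁻ \ G⁺ ⊆ X_n). Then: (a) the activation of G on X is an n-cell and G⁺ ∩ X_n = ∅; (b) the gluing of X on G is an (n+1)-cell; and (c) for every finite fork-free G' ⊆ P_{n+1} dually glueable on X (G'⁺ \ G'⁻ ⊆ X_n), one has G'⁻ ∩ G⁺ = ∅. -/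
namespace OHG

open Finset

variable {P : OHG}

/-- one-step global order on generators -/
def step (P : OHG) {n : ℕ} (x y : P.gen (n + 1)) : Prop :=
  (P.tgt x ∩ P.src y).Nonempty

lemma tlone_step {n : ℕ} {U : Finset (P.gen (n+1))} {x y : P.gen (n+1)}
    (h : P.tlone U x y) : P.step x y := h.2.2

lemma tl_transGen {n : ℕ} {U : Finset (P.gen (n+1))} {x y : P.gen (n+1)}
    (h : P.tl U x y) : Relation.TransGen P.step x y :=
  Relation.TransGen.mono (fun _ _ hh => tlone_step hh) _ _ h

lemma acyclic_step (hF1 : P.Acyclic) {n : ℕ} {x : P.gen (n+1)} :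
    ¬ Relation.TransGen P.step x x := hF1 n x

lemma step_of_mem {n : ℕ} {x y : P.gen (n+1)} {a : P.gen n}
    (h1 : a ∈ P.tgt x) (h2 : a ∈ P.src y) : P.step x y :=
  ⟨a, Finset.mem_inter.2 ⟨h1, h2⟩⟩

lemma src_tgt_dj (hF1 : P.Acyclic) {n : ℕ} {x : P.gen (n+1)} {a : P.gen n}
    (h1 : a ∈ P.src x) (h2 : a ∈ P.tgt x) : False :=
  hF1 n x (Relation.TransGen.single (step_of_mem h2 h1))

lemma mem_setSrc {n : ℕ} {S : Finset (P.gen (n+1))} {a : P.gen n} :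
    a ∈ P.setSrc S ↔ ∃ x ∈ S, a ∈ P.src x := Finset.mem_biUnion

lemma mem_setTgt {n : ℕ} {S : Finset (P.gen (n+1))} {a : P.gen n} :
    a ∈ P.setTgt S ↔ ∃ x ∈ S, a ∈ P.tgt x := Finset.mem_biUnion

lemma mem_setSrc_of {n : ℕ} {S : Finset (P.gen (n+1))} {x : P.gen (n+1)} {a : P.gen n}
    (hx : x ∈ S) (ha : a ∈ P.src x) : a ∈ P.setSrc S := mem_setSrc.2 ⟨x, hx, ha⟩
lemma mem_setTgt_of {n : ℕ} {S : Finset (P.gen (n+1))} {x : P.gen (n+1)} {a : P.gen n}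
    (hx : x ∈ S) (ha : a ∈ P.tgt x) : a ∈ P.setTgt S := mem_setTgt.2 ⟨x, hx, ha⟩

lemma setSrc_union {n : ℕ} (S T : Finset (P.gen (n+1))) :
    P.setSrc (S ∪ T) = P.setSrc S ∪ P.setSrc T := by
  ext a
  simp only [mem_setSrc, Finset.mem_union]
  constructor
  · rintro ⟨x, hx | hx, ha⟩
    · exact Or.inl ⟨x, hx, ha⟩
    · exact Or.inr ⟨x, hx, ha⟩
  · rintro (⟨x, hx, ha⟩ | ⟨x, hx, ha⟩)
    · exact ⟨x, Or.inl hx, ha⟩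
    · exact ⟨x, Or.inr hx, ha⟩

lemma setTgt_union {n : ℕ} (S T : Finset (P.gen (n+1))) :
    P.setTgt (S ∪ T) = P.setTgt S ∪ P.setTgt T := by
  ext a
  simp only [mem_setTgt, Finset.mem_union]
  constructor
  · rintro ⟨x, hx | hx, ha⟩
    · exact Or.inl ⟨x, hx, ha⟩
    · exact Or.inr ⟨x, hx, ha⟩
  · rintro (⟨x, hx, ha⟩ | ⟨x, hx, ha⟩)
    · exact ⟨x, Or.inl hx, ha⟩
    · exact ⟨x, Or.inr hx, ha⟩

lemma setSrc_singleton {n : ℕ} (x : P.gen (n+1)) : P.setSrc {x} = P.src x :=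
  Finset.singleton_biUnion
lemma setTgt_singleton {n : ℕ} (x : P.gen (n+1)) : P.setTgt {x} = P.tgt x :=
  Finset.singleton_biUnion

lemma setSrc_mono {n : ℕ} {S T : Finset (P.gen (n+1))} (h : S ⊆ T) :
    P.setSrc S ⊆ P.setSrc T := Finset.biUnion_subset_biUnion_of_subset_left _ h
lemma setTgt_mono {n : ℕ} {S T : Finset (P.gen (n+1))} (h : S ⊆ T) :
    P.setTgt S ⊆ P.setTgt T := Finset.biUnion_subset_biUnion_of_subset_left _ h

/-- pointwise emptiness of intersection -/
def Dj {α : Type} (A B : Finset α) : Prop := ∀ a, a ∈ A → a ∈ B → False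

lemma dj_iff {α : Type} [DecidableEq α] {A B : Finset α} : Dj A B ↔ A ∩ B = ∅ := by
  constructor
  · intro h; ext a
    simp only [Finset.mem_inter, Finset.notMem_empty, iff_false, not_and]
    exact fun ha hb => h a ha hb
  · intro h a ha hb
    have : a ∈ A ∩ B := Finset.mem_inter.2 ⟨ha, hb⟩
    rw [h] at this; exact Finset.notMem_empty a this

/-- pointwise characterization of movement -/
lemma moves_iff {n : ℕ} {S : Finset (P.gen (n+1))} {U V : Finset (P.gen n)} :
    P.Moves S U V ↔ ∀ a : P.gen n,
      (a ∈ V ↔ (a ∈ U ∨ a ∈ P.setTgt S) ∧ a ∉ P.setSrc S) ∧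
      (a ∈ U ↔ (a ∈ V ∨ a ∈ P.setSrc S) ∧ a ∉ P.setTgt S) := by
  constructor
  · rintro ⟨h1, h2⟩ a
    constructor
    · conv_lhs => rw [h1]
      simp [Finset.mem_sdiff, Finset.mem_union]
    · conv_lhs => rw [h2]
      simp [Finset.mem_sdiff, Finset.mem_union]
  · intro h
    constructor
    · ext a
      have := (h a).1
      simp only [Finset.mem_sdiff, Finset.mem_union]
      tauto
    · ext a
      have := (h a).2
      simp only [Finset.mem_sdiff, Finset.mem_union]
      tauto

section MovesLemmas

variable {n : ℕ} {S S₁ S₂ : Finset (P.gen (n+1))} {U V H : Finset (P.gen n)}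

lemma Moves.mem_v (h : P.Moves S U V) (a : P.gen n) :
    a ∈ V ↔ (a ∈ U ∨ a ∈ P.setTgt S) ∧ a ∉ P.setSrc S := (moves_iff.1 h a).1

lemma Moves.mem_u (h : P.Moves S U V) (a : P.gen n) :
    a ∈ U ↔ (a ∈ V ∨ a ∈ P.setSrc S) ∧ a ∉ P.setTgt S := (moves_iff.1 h a).2

lemma Moves.u_tgt (h : P.Moves S U V) : Dj U (P.setTgt S) := by
  intro a ha hat; exact (((h.mem_u a).1 ha).2) hat

lemma Moves.v_src (h : P.Moves S U V) : Dj V (P.setSrc S) := by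
  intro a ha hat; exact (((h.mem_v a).1 ha).2) hat

lemma Moves.mp_eq (h : P.Moves S U V) : P.mp S = U \ V := by
  ext a
  have h1 := h.mem_u a; have h2 := h.mem_v a
  simp only [OHG.mp, Finset.mem_sdiff] at *
  tauto

lemma Moves.pm_eq (h : P.Moves S U V) : P.pm S = V \ U := by
  ext a
  have h1 := h.mem_u a; have h2 := h.mem_v a
  simp only [OHG.pm, Finset.mem_sdiff] at *
  tauto

lemma Moves.mp_sub (h : P.Moves S U V) : P.mp S ⊆ U := by
  rw [h.mp_eq]; exact Finset.sdiff_subset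

lemma Moves.pm_sub (h : P.Moves S U V) : P.pm S ⊆ V := by
  rw [h.pm_eq]; exact Finset.sdiff_subset

lemma Moves.src_mem (h : P.Moves S U V) {a : P.gen n} (ha : a ∈ P.setSrc S) :
    a ∈ U ∨ a ∈ P.setTgt S := by
  by_cases ht : a ∈ P.setTgt S
  · exact Or.inr ht
  · exact Or.inl (h.mp_sub (Finset.mem_sdiff.2 ⟨ha, ht⟩))

lemma Moves.tgt_mem (h : P.Moves S U V) {a : P.gen n} (ha : a ∈ P.setTgt S) :
    a ∈ V ∨ a ∈ P.setSrc S := by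
  by_cases ht : a ∈ P.setSrc S
  · exact Or.inr ht
  · exact Or.inl (h.pm_sub (Finset.mem_sdiff.2 ⟨ha, ht⟩))

set_option maxHeartbeats 1600000 in
/-- Composition of movements. -/
lemma Moves.comp (h1 : P.Moves S₁ U H) (h2 : P.Moves S₂ H V)
    (hd : Dj (P.setSrc S₁) (P.setTgt S₂)) : P.Moves (S₁ ∪ S₂) U V := by
  rw [moves_iff]
  intro a
  have e1 := h1.mem_u a; have e2 := h1.mem_v a
  have e3 := h2.mem_u a; have e4 := h2.mem_v a
  have e5 := fun x y => hd a x y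
  rw [setTgt_union, setSrc_union]
  simp only [Finset.mem_union]
  constructor
  · tauto
  · tauto

set_option maxHeartbeats 1600000 in
/-- Splitting of movements. -/
lemma Moves.split (h : P.Moves (S₁ ∪ S₂) U V)
    (hss : Dj (P.setSrc S₁) (P.setSrc S₂)) (htt : Dj (P.setTgt S₁) (P.setTgt S₂))
    (hst : Dj (P.setSrc S₁) (P.setTgt S₂)) :
    P.Moves S₁ U ((U ∪ P.setTgt S₁) \ P.setSrc S₁) ∧
    P.Moves S₂ ((U ∪ P.setTgt S₁) \ P.setSrc S₁) V := by
  have hU := fun a => h.mem_u a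
  have hV := fun a => h.mem_v a
  have hut := h.u_tgt
  have hvs := h.v_src
  have hmp : ∀ a : P.gen n, a ∈ P.setSrc S₁ → a ∉ P.setTgt S₁ → a ∈ U := by
    intro a hs ht
    refine h.mp_sub (Finset.mem_sdiff.2 ⟨?_, ?_⟩)
    · rw [setSrc_union]; exact Finset.mem_union.2 (Or.inl hs)
    · rw [setTgt_union]
      intro hh
      rcases Finset.mem_union.1 hh with h7 | h7
      · exact ht h7
      · exact hst a hs h7
  have hmp2 : ∀ a : P.gen n,
      a ∈ P.setSrc S₂ → a ∉ P.setTgt S₁ → a ∉ P.setTgt S₂ → a ∈ U := by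
    intro a hs ht1 ht2
    refine h.mp_sub (Finset.mem_sdiff.2 ⟨?_, ?_⟩)
    · rw [setSrc_union]; exact Finset.mem_union.2 (Or.inr hs)
    · rw [setTgt_union]
      intro hh
      rcases Finset.mem_union.1 hh with h7 | h7
      · exact ht1 h7
      · exact ht2 h7
  refine ⟨⟨rfl, ?_⟩, ?_, ?_⟩
  · ext a
    have f2 := hV a
    have f3 := hmp a
    have f4 := fun x y => hut a x y
    have f7 := fun x y => hst a x y
    simp only [setSrc_union, setTgt_union, Finset.mem_sdiff, Finset.mem_union] at *
    tauto
  · conv_lhs => rw [h.1]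
    rw [setTgt_union, setSrc_union]
    ext a
    have f7 := fun x y => hst a x y
    simp only [Finset.mem_sdiff, Finset.mem_union] at *
    tauto
  · ext a
    simp only [Finset.mem_sdiff, Finset.mem_union]
    constructor
    · rintro ⟨h5 | h5, h6⟩
      · have h7 : a ∉ P.setTgt S₁ := fun hh => hut a h5
          (by rw [setTgt_union]; exact Finset.mem_union.2 (Or.inl hh))
        have h8 : a ∉ P.setTgt S₂ := fun hh => hut a h5
          (by rw [setTgt_union]; exact Finset.mem_union.2 (Or.inr hh))
        by_cases h9 : a ∈ P.setSrc S₂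
        · exact ⟨Or.inr h9, h8⟩
        · refine ⟨Or.inl ((hV a).2 ⟨Or.inl h5, ?_⟩), h8⟩
          rw [setSrc_union]
          intro hh
          rcases Finset.mem_union.1 hh with hx | hx
          · exact h6 hx
          · exact h9 hx
      · have h8 : a ∉ P.setTgt S₂ := fun hh => htt a h5 hh
        by_cases h9 : a ∈ P.setSrc S₂
        · exact ⟨Or.inr h9, h8⟩
        · refine ⟨Or.inl ((h.tgt_mem (S := S₁ ∪ S₂) ?_).resolve_right ?_), h8⟩
          · rw [setTgt_union]; exact Finset.mem_union.2 (Or.inl h5)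
          · rw [setSrc_union]
            intro hh
            rcases Finset.mem_union.1 hh with hx | hx
            · exact h6 hx
            · exact h9 hx
    · rintro ⟨h5 | h5, h6⟩
      · have h7 : a ∉ P.setSrc S₁ := fun hh => hvs a h5
          (by rw [setSrc_union]; exact Finset.mem_union.2 (Or.inl hh))
        have h7b : a ∉ P.setSrc S₂ := fun hh => hvs a h5
          (by rw [setSrc_union]; exact Finset.mem_union.2 (Or.inr hh))
        by_cases h9 : a ∈ P.setTgt S₁
        · exact ⟨Or.inr h9, h7⟩
        · refine ⟨Or.inl ((hU a).2 ⟨Or.inl h5, ?_⟩), h7⟩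
          rw [setTgt_union]
          intro hh
          rcases Finset.mem_union.1 hh with hx | hx
          · exact h9 hx
          · exact h6 hx
      · have h7 : a ∉ P.setSrc S₁ := fun hh => hss a hh h5
        by_cases h9 : a ∈ P.setTgt S₁
        · exact ⟨Or.inr h9, h7⟩
        · exact ⟨Or.inl (hmp2 a h5 h9 h6), h7⟩

end MovesLemmas

end OHG


namespace OHG

open Finset

attribute [local instance] Classical.propDecidable

variable {P : OHG}

section ForkFreeLemmas

variable {n : ℕ} {S T : Finset (P.gen (n+1))}

lemma ff_subset (h : P.ForkFree (n+1) S) (hsub : T ⊆ S) : P.ForkFree (n+1) T :=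
  fun x hx y hy hxy => h x (hsub hx) y (hsub hy) hxy

lemma ff_src_dj (h : P.ForkFree (n+1) S) {x y : P.gen (n+1)} (hx : x ∈ S) (hy : y ∈ S)
    (hxy : x ≠ y) : Dj (P.src x) (P.src y) := dj_iff.2 (h x hx y hy hxy).1

lemma ff_tgt_dj (h : P.ForkFree (n+1) S) {x y : P.gen (n+1)} (hx : x ∈ S) (hy : y ∈ S)
    (hxy : x ≠ y) : Dj (P.tgt x) (P.tgt y) := dj_iff.2 (h x hx y hy hxy).2

lemma ff_eq_of_src (h : P.ForkFree (n+1) S) {x y : P.gen (n+1)} (hx : x ∈ S) (hy : y ∈ S)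
    {a : P.gen n} (hax : a ∈ P.src x) (hay : a ∈ P.src y) : x = y := by
  by_contra hne
  exact ff_src_dj h hx hy hne a hax hay

lemma ff_eq_of_tgt (h : P.ForkFree (n+1) S) {x y : P.gen (n+1)} (hx : x ∈ S) (hy : y ∈ S)
    {a : P.gen n} (hax : a ∈ P.tgt x) (hay : a ∈ P.tgt y) : x = y := by
  by_contra hne
  exact ff_tgt_dj h hx hy hne a hax hay

lemma ff_dj_setSrc (h : P.ForkFree (n+1) (S ∪ T)) (hd : Dj S T) :
    Dj (P.setSrc S) (P.setSrc T) := by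
  intro a h1 h2
  obtain ⟨x, hx, hax⟩ := mem_setSrc.1 h1
  obtain ⟨y, hy, hay⟩ := mem_setSrc.1 h2
  have hxy : x ≠ y := fun e => hd x hx (e ▸ hy)
  exact ff_src_dj h (Finset.mem_union.2 (Or.inl hx)) (Finset.mem_union.2 (Or.inr hy)) hxy a hax hay

lemma ff_dj_setTgt (h : P.ForkFree (n+1) (S ∪ T)) (hd : Dj S T) :
    Dj (P.setTgt S) (P.setTgt T) := by
  intro a h1 h2
  obtain ⟨x, hx, hax⟩ := mem_setTgt.1 h1
  obtain ⟨y, hy, hay⟩ := mem_setTgt.1 h2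
  have hxy : x ≠ y := fun e => hd x hx (e ▸ hy)
  exact ff_tgt_dj h (Finset.mem_union.2 (Or.inl hx)) (Finset.mem_union.2 (Or.inr hy)) hxy a hax hay

end ForkFreeLemmas

section Extremal

variable {n : ℕ}

/-- in a finite set with acyclic `step`, there is an element with no predecessor in the set -/
lemma exists_minimal (hF1 : P.Acyclic) (S : Finset (P.gen (n+1))) (hS : S.Nonempty) :
    ∃ m ∈ S, ∀ x ∈ S, ¬ P.step x m := by
  classical
  induction S using Finset.strongInduction with
  | _ S ih =>
    obtain ⟨s, hs⟩ := hS
    by_cases h : ∀ x ∈ S, ¬ P.step x s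
    · exact ⟨s, hs, h⟩
    · push_neg at h
      obtain ⟨x, hx, hxs⟩ := h
      set T := S.filter (fun y => Relation.TransGen P.step y s) with hT
      have hTsub : T ⊆ S := Finset.filter_subset _ _
      have hsT : s ∉ T := by
        intro hh
        exact acyclic_step hF1 (Finset.mem_filter.1 hh).2
      have hTss : T ⊂ S := ⟨hTsub, fun hh => hsT (hh hs)⟩
      have hxT : x ∈ T := Finset.mem_filter.2 ⟨hx, Relation.TransGen.single hxs⟩
      obtain ⟨m, hmT, hmin⟩ := ih T hTss ⟨x, hxT⟩
      refine ⟨m, hTsub hmT, fun y hy hym => ?_⟩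
      have hmS : Relation.TransGen P.step m s := (Finset.mem_filter.1 hmT).2
      have hyT : y ∈ T := Finset.mem_filter.2 ⟨hy, Relation.TransGen.head hym hmS⟩
      exact hmin y hyT hym

lemma exists_maximal (hF1 : P.Acyclic) (S : Finset (P.gen (n+1))) (hS : S.Nonempty) :
    ∃ m ∈ S, ∀ x ∈ S, ¬ P.step m x := by
  classical
  induction S using Finset.strongInduction with
  | _ S ih =>
    obtain ⟨s, hs⟩ := hS
    by_cases h : ∀ x ∈ S, ¬ P.step s x
    · exact ⟨s, hs, h⟩
    · push_neg at h
      obtain ⟨x, hx, hxs⟩ := h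
      set T := S.filter (fun y => Relation.TransGen P.step s y) with hT
      have hTsub : T ⊆ S := Finset.filter_subset _ _
      have hsT : s ∉ T := by
        intro hh
        exact acyclic_step hF1 (Finset.mem_filter.1 hh).2
      have hTss : T ⊂ S := ⟨hTsub, fun hh => hsT (hh hs)⟩
      have hxT : x ∈ T := Finset.mem_filter.2 ⟨hx, Relation.TransGen.single hxs⟩
      obtain ⟨m, hmT, hmax⟩ := ih T hTss ⟨x, hxT⟩
      refine ⟨m, hTsub hmT, fun y hy hym => ?_⟩
      have hmS : Relation.TransGen P.step s m := (Finset.mem_filter.1 hmT).2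
      have hyT : y ∈ T := Finset.mem_filter.2 ⟨hy, Relation.TransGen.tail hmS hym⟩
      exact hmax y hyT hym

/-- from any element one can reach a maximal element of the set along `step`-chains -/
lemma exists_maximal_from (hF1 : P.Acyclic) (S : Finset (P.gen (n+1)))
    {z : P.gen (n+1)} (hz : z ∈ S) :
    ∃ m ∈ S, Relation.ReflTransGen P.step z m ∧ ∀ x ∈ S, ¬ P.step m x := by
  classical
  suffices h : ∀ k, ∀ z, z ∈ S → (S.filter (fun w => Relation.TransGen P.step z w)).card ≤ k →
      ∃ m ∈ S, Relation.ReflTransGen P.step z m ∧ ∀ x ∈ S, ¬ P.step m x by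
    exact h _ z hz le_rfl
  intro k
  induction k with
  | zero =>
    intro z hz hcard
    refine ⟨z, hz, Relation.ReflTransGen.refl, fun x hx hzx => ?_⟩
    have : x ∈ S.filter (fun w => Relation.TransGen P.step z w) :=
      Finset.mem_filter.2 ⟨hx, Relation.TransGen.single hzx⟩
    have := Finset.card_pos.2 ⟨x, this⟩
    omega
  | succ k ih =>
    intro z hz hcard
    by_cases h : ∀ x ∈ S, ¬ P.step z x
    · exact ⟨z, hz, Relation.ReflTransGen.refl, h⟩
    · push_neg at h
      obtain ⟨y, hy, hzy⟩ := h
      have hsub : S.filter (fun w => Relation.TransGen P.step y w) ⊆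
          S.filter (fun w => Relation.TransGen P.step z w) := by
        intro w hw
        obtain ⟨hw1, hw2⟩ := Finset.mem_filter.1 hw
        exact Finset.mem_filter.2 ⟨hw1, Relation.TransGen.head hzy hw2⟩
      have hyz : y ∈ S.filter (fun w => Relation.TransGen P.step z w) :=
        Finset.mem_filter.2 ⟨hy, Relation.TransGen.single hzy⟩
      have hyy : y ∉ S.filter (fun w => Relation.TransGen P.step y w) := by
        intro hh
        exact acyclic_step hF1 (Finset.mem_filter.1 hh).2
      have hlt : (S.filter (fun w => Relation.TransGen P.step y w)).card <
          (S.filter (fun w => Relation.TransGen P.step z w)).card :=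
        Finset.card_lt_card ⟨hsub, fun hh => hyy (hh hyz)⟩
      obtain ⟨m, hm, hchain, hmax⟩ := ih y hy (by omega)
      exact ⟨m, hm, Relation.ReflTransGen.head hzy hchain, hmax⟩

lemma exists_minimal_from (hF1 : P.Acyclic) (S : Finset (P.gen (n+1)))
    {z : P.gen (n+1)} (hz : z ∈ S) :
    ∃ m ∈ S, Relation.ReflTransGen P.step m z ∧ ∀ x ∈ S, ¬ P.step x m := by
  classical
  suffices h : ∀ k, ∀ z, z ∈ S → (S.filter (fun w => Relation.TransGen P.step w z)).card ≤ k →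
      ∃ m ∈ S, Relation.ReflTransGen P.step m z ∧ ∀ x ∈ S, ¬ P.step x m by
    exact h _ z hz le_rfl
  intro k
  induction k with
  | zero =>
    intro z hz hcard
    refine ⟨z, hz, Relation.ReflTransGen.refl, fun x hx hzx => ?_⟩
    have : x ∈ S.filter (fun w => Relation.TransGen P.step w z) :=
      Finset.mem_filter.2 ⟨hx, Relation.TransGen.single hzx⟩
    have := Finset.card_pos.2 ⟨x, this⟩
    omega
  | succ k ih =>
    intro z hz hcard
    by_cases h : ∀ x ∈ S, ¬ P.step x z
    · exact ⟨z, hz, Relation.ReflTransGen.refl, h⟩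
    · push_neg at h
      obtain ⟨y, hy, hzy⟩ := h
      have hsub : S.filter (fun w => Relation.TransGen P.step w y) ⊆
          S.filter (fun w => Relation.TransGen P.step w z) := by
        intro w hw
        obtain ⟨hw1, hw2⟩ := Finset.mem_filter.1 hw
        exact Finset.mem_filter.2 ⟨hw1, Relation.TransGen.tail hw2 hzy⟩
      have hyz : y ∈ S.filter (fun w => Relation.TransGen P.step w z) :=
        Finset.mem_filter.2 ⟨hy, Relation.TransGen.single hzy⟩
      have hyy : y ∉ S.filter (fun w => Relation.TransGen P.step w y) := by
        intro hh
        exact acyclic_step hF1 (Finset.mem_filter.1 hh).2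
      have hlt : (S.filter (fun w => Relation.TransGen P.step w y)).card <
          (S.filter (fun w => Relation.TransGen P.step w z)).card :=
        Finset.card_lt_card ⟨hsub, fun hh => hyy (hh hyz)⟩
      obtain ⟨m, hm, hchain, hmin⟩ := ih y hy (by omega)
      exact ⟨m, hm, Relation.ReflTransGen.tail hchain hzy, hmin⟩

lemma rtg_ne_transGen {α : Type} {r : α → α → Prop} {a b : α}
    (h : Relation.ReflTransGen r a b) (hne : a ≠ b) : Relation.TransGen r a b := by
  rcases (Relation.reflTransGen_iff_eq_or_transGen.1 h) with h1 | h1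
  · exact absurd h1.symm hne
  · exact h1

end Extremal

section Casts

lemma castSet_self {i : ℕ} (e : i = i) (S : Finset (P.gen i)) : P.castSet e S = S := rfl

lemma castSet_cast {i j : ℕ} (e1 : i = j) (e2 : j = i) (S : Finset (P.gen i)) :
    P.castSet e2 (P.castSet e1 S) = S := by
  subst e1; rfl

lemma iterBd_congr (ε : Bool) {k k' : ℕ} (hk : k = k') {i : ℕ} (S : Finset (P.gen (i+k))) :
    P.iterBd ε k S = P.iterBd ε k' (P.castSet (by rw [hk]) S) := by
  subst hk; rfl

/-- the codimension-one side of an atom -/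
lemma atomSide_succ {m : ℕ} (x : P.gen (m+1)) (ε : Bool) (h : m ≤ m+1) :
    P.atomSide x ε m h = P.bd ε {x} := by
  unfold atomSide
  rw [iterBd_congr ε (show m+1-m = 1 by omega)]
  rw [castSet_cast]
  rfl

lemma mp_singleton {n : ℕ} (x : P.gen (n+1)) : P.mp {x} = P.src x \ P.tgt x := by
  unfold mp
  rw [setSrc_singleton, setTgt_singleton]

lemma pm_singleton {n : ℕ} (x : P.gen (n+1)) : P.pm {x} = P.tgt x \ P.src x := by
  unfold pm
  rw [setSrc_singleton, setTgt_singleton]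

lemma atomSide_neg_succ (hF1 : P.Acyclic) {m : ℕ} (x : P.gen (m+1)) (h : m ≤ m+1) :
    P.atomSide x false m h = P.src x := by
  rw [atomSide_succ]
  show P.mp {x} = P.src x
  rw [mp_singleton]
  ext a
  simp only [Finset.mem_sdiff]
  exact ⟨fun hh => hh.1, fun hh => ⟨hh, fun h2 => src_tgt_dj hF1 hh h2⟩⟩

lemma atomSide_pos_succ (hF1 : P.Acyclic) {m : ℕ} (x : P.gen (m+1)) (h : m ≤ m+1) :
    P.atomSide x true m h = P.tgt x := by
  rw [atomSide_succ]
  show P.pm {x} = P.tgt x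
  rw [pm_singleton]
  ext a
  simp only [Finset.mem_sdiff]
  exact ⟨fun hh => hh.1, fun hh => ⟨hh, fun h2 => src_tgt_dj hF1 h2 hh⟩⟩

end Casts

section PreCells

lemma PreCell.negTop {n : ℕ} (Y : P.PreCell n) (h : n ≤ n) : Y.neg n h = Y.top := rfl

lemma precell_ext {n : ℕ} {X Y : P.PreCell n}
    (h1 : ∀ i h, X.neg i h = Y.neg i h) (h2 : ∀ i h, X.pos i h = Y.pos i h) : X = Y := by
  cases X with | mk Xn Xp Xe =>
  cases Y with | mk Yn Yp Ye =>
  have e1 : Xn = Yn := by funext i h; exact h1 i h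
  have e2 : Xp = Yp := by funext i h; exact h2 i h
  subst e1; subst e2; rfl

lemma isCell_congr {n : ℕ} {X Y : P.PreCell n}
    (h1 : ∀ i h, X.neg i h = Y.neg i h) (h2 : ∀ i h, X.pos i h = Y.pos i h)
    (h : P.IsCell X) : P.IsCell Y := precell_ext h1 h2 ▸ h

/-- the `m`-source of an `(m+1)`-pre-cell -/
def nSrc {m : ℕ} (X : P.PreCell (m+1)) : P.PreCell m where
  neg i h := X.neg i (by omega)
  pos i h := if h' : i = m then P.castSet h'.symm (X.neg m (by omega)) else X.pos i (by omega)
  top_eq := by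
    beta_reduce
    rw [dif_pos rfl]
    rfl

lemma nSrc_top {m : ℕ} (X : P.PreCell (m+1)) : (nSrc X).top = X.neg m (by omega) := rfl

lemma nSrc_neg {m : ℕ} (X : P.PreCell (m+1)) (i : ℕ) (h : i ≤ m) :
    (nSrc X).neg i h = X.neg i (by omega) := rfl

lemma nSrc_pos_lt {m : ℕ} (X : P.PreCell (m+1)) (i : ℕ) (h : i ≤ m) (hne : i ≠ m) :
    (nSrc X).pos i h = X.pos i (by omega) := by
  show dite _ _ _ = _
  rw [dif_neg hne]

lemma nSrc_isCell {m : ℕ} {X : P.PreCell (m+1)} (hX : P.IsCell X) : P.IsCell (nSrc X) := by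
  constructor
  · intro i h
    refine ⟨(hX.1 i (by omega)).1, ?_⟩
    by_cases h' : i = m
    · subst h'
      rw [show (nSrc X).pos i h = X.neg i (by omega) from by
        show dite _ _ _ = _; rw [dif_pos rfl]; rfl]
      exact (hX.1 i (by omega)).1
    · rw [nSrc_pos_lt X i h h']
      exact (hX.1 i (by omega)).2
  · intro i h
    constructor
    · rw [nSrc_neg, nSrc_neg, nSrc_pos_lt X i (by omega) (by omega)]
      exact (hX.2 i (by omega)).1
    · by_cases h' : i + 1 = m
      · rw [show (nSrc X).pos (i+1) h = P.castSet h'.symm (X.neg m (by omega)) from by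
          show dite _ _ _ = _; rw [dif_pos h']]
        subst h'
        rw [castSet_self, nSrc_neg, nSrc_pos_lt X i (by omega) (by omega)]
        exact (hX.2 i (by omega)).1
      · rw [nSrc_pos_lt X (i+1) h h', nSrc_neg, nSrc_pos_lt X i (by omega) (by omega)]
        exact (hX.2 i (by omega)).2

/-- the top-level movement of an `(m+1)`-cell -/
lemma cell_top_moves {m : ℕ} {X : P.PreCell (m+1)} (hX : P.IsCell X) :
    P.Moves X.top (X.neg m (by omega)) (X.pos m (by omega)) := by
  have h := (hX.2 m le_rfl).1
  exact h

end PreCells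

section ActGlue

variable {n : ℕ} (X : P.PreCell n) (G : Finset (P.gen (n+1)))

lemma activation_top : (P.activation X G).top = (X.top ∪ P.setTgt G) \ P.setSrc G := by
  show dite _ _ _ = _
  rw [dif_pos rfl]
  rfl

lemma activation_neg (i : ℕ) (h : i ≤ n) (hne : i ≠ n) :
    (P.activation X G).neg i h = X.neg i h := by
  show dite _ _ _ = _
  rw [dif_neg hne]

lemma activation_pos (i : ℕ) (h : i ≤ n) (hne : i ≠ n) :
    (P.activation X G).pos i h = X.pos i h := by
  show dite _ _ _ = _
  rw [dif_neg hne]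

lemma gluing_neg_le (i : ℕ) (h : i ≤ n+1) (h' : i ≤ n) :
    (P.gluing X G).neg i h = X.neg i h' := by
  show dite _ _ _ = _
  rw [dif_pos h']

lemma gluing_neg_top (h : n+1 ≤ n+1) : (P.gluing X G).neg (n+1) h = G := by
  show dite _ _ _ = _
  rw [dif_neg (by omega : ¬ (n+1 ≤ n))]
  rfl

lemma activation_negN (h : n ≤ n) :
    (P.activation X G).neg n h = (X.top ∪ P.setTgt G) \ P.setSrc G := by
  show dite _ _ _ = _
  rw [dif_pos rfl]
  rfl

lemma activation_posN (h : n ≤ n) :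
    (P.activation X G).pos n h = (X.top ∪ P.setTgt G) \ P.setSrc G := by
  show dite _ _ _ = _
  rw [dif_pos rfl]
  rfl

lemma gluing_pos_lt (i : ℕ) (h : i ≤ n+1) (h' : i ≤ n) (hne : i ≠ n) :
    (P.gluing X G).pos i h = X.pos i h' := by
  show dite _ _ _ = _
  rw [dif_pos h', dif_neg hne]

lemma gluing_pos_n (h : n ≤ n+1) :
    (P.gluing X G).pos n h = (X.top ∪ P.setTgt G) \ P.setSrc G := by
  show dite _ _ _ = _
  rw [dif_pos le_rfl, dif_pos rfl]
  rfl

lemma gluing_pos_top (h : n+1 ≤ n+1) : (P.gluing X G).pos (n+1) h = G := by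
  show dite _ _ _ = _
  rw [dif_neg (by omega : ¬ (n+1 ≤ n))]
  rfl

lemma gluing_top : (P.gluing X G).top = G := gluing_neg_top X G le_rfl

end ActGlue

end OHG


namespace OHG

variable {P : OHG}

/-- the opposite ω-hypergraph -/
def op (P : OHG) : OHG where
  gen := P.gen
  deceq := P.deceq
  src := fun {_} x => P.tgt x
  tgt := fun {_} x => P.src x

lemma op_setSrc {n : ℕ} (S : Finset (P.gen (n+1))) : P.op.setSrc S = P.setTgt S := rfl
lemma op_setTgt {n : ℕ} (S : Finset (P.gen (n+1))) : P.op.setTgt S = P.setSrc S := rfl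
lemma op_mp {n : ℕ} (S : Finset (P.gen (n+1))) : P.op.mp S = P.pm S := rfl
lemma op_pm {n : ℕ} (S : Finset (P.gen (n+1))) : P.op.pm S = P.mp S := rfl

lemma op_moves {n : ℕ} {S : Finset (P.gen (n+1))} {U V : Finset (P.gen n)} :
    P.op.Moves S U V ↔ P.Moves S V U :=
  ⟨fun h => ⟨h.2, h.1⟩, fun h => ⟨h.2, h.1⟩⟩

lemma op_ff : ∀ {k : ℕ} {S : Finset (P.gen k)}, (P.op.ForkFree k S ↔ P.ForkFree k S)
  | 0, _ => Iff.rfl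
  | _+1, _ => ⟨fun h x hx y hy hxy => ⟨(h x hx y hy hxy).2, (h x hx y hy hxy).1⟩,
      fun h x hx y hy hxy => ⟨(h x hx y hy hxy).2, (h x hx y hy hxy).1⟩⟩

lemma op_step {n : ℕ} {x y : P.gen (n+1)} : P.op.step x y ↔ P.step y x := by
  unfold step op
  constructor
  · rintro ⟨a, ha⟩
    rcases Finset.mem_inter.1 ha with ⟨h1, h2⟩
    exact ⟨a, Finset.mem_inter.2 ⟨h2, h1⟩⟩
  · rintro ⟨a, ha⟩
    rcases Finset.mem_inter.1 ha with ⟨h1, h2⟩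
    exact ⟨a, Finset.mem_inter.2 ⟨h2, h1⟩⟩

lemma transGen_flip {α : Type} {r r' : α → α → Prop} (hr : ∀ a b, r a b → r' b a)
    {a b : α} (h : Relation.TransGen r a b) : Relation.TransGen r' b a := by
  induction h with
  | single h1 => exact Relation.TransGen.single (hr _ _ h1)
  | tail _ h2 ih => exact Relation.TransGen.head (hr _ _ h2) ih

lemma op_acyclic (h : P.Acyclic) : P.op.Acyclic := by
  intro n x hcyc
  exact h n x (transGen_flip (fun a b hh => op_step.1 hh) hcyc)

lemma op_nonEmpty (h : P.NonEmptySrcTgt) : P.op.NonEmptySrcTgt :=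
  fun n x => ⟨(h n x).2, (h n x).1⟩

/-- the opposite pre-cell -/
def PreCell.op {n : ℕ} (X : P.PreCell n) : P.op.PreCell n :=
  ⟨X.pos, X.neg, X.top_eq.symm⟩

lemma op_top {n : ℕ} (X : P.PreCell n) : X.op.top = X.top := X.top_eq.symm

lemma op_isCell {n : ℕ} {X : P.PreCell n} (h : P.IsCell X) : P.op.IsCell X.op := by
  constructor
  · intro i hi
    exact ⟨op_ff.2 (h.1 i hi).2, op_ff.2 (h.1 i hi).1⟩
  · intro i hi
    exact ⟨op_moves.2 (h.2 i hi).2, op_moves.2 (h.2 i hi).1⟩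

lemma op_isCell' {n : ℕ} {X : P.op.PreCell n} (h : P.op.IsCell X) : P.IsCell (X.op) :=
  op_isCell (P := P.op) h

lemma op_bd (ε : Bool) {i : ℕ} (S : Finset (P.gen (i+1))) :
    P.op.bd ε S = P.bd (!ε) S := by
  cases ε <;> rfl

lemma op_iterBd (ε : Bool) : ∀ (k : ℕ) {i : ℕ} (S : Finset (P.gen (i+k))),
    P.op.iterBd ε k S = P.iterBd (!ε) k S
  | 0, _, _ => rfl
  | k+1, i, S => by
    show P.op.iterBd ε k (P.op.bd ε S) = P.iterBd (!ε) k (P.bd (!ε) S)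
    rw [op_bd]
    exact op_iterBd ε k _

lemma op_castSet {i j : ℕ} (e : i = j) (S : Finset (P.gen i)) :
    P.op.castSet e S = P.castSet e S := by
  subst e; rfl

lemma op_atomSide {m : ℕ} (x : P.gen m) (ε : Bool) (i : ℕ) (h : i ≤ m) :
    P.op.atomSide x ε i h = P.atomSide x (!ε) i h := by
  unfold atomSide
  exact op_iterBd ε (m - i) _

lemma op_atom {m : ℕ} (x : P.gen m) : P.op.atom x = (P.atom x).op := by
  refine precell_ext (fun i h => ?_) (fun i h => ?_)
  · exact op_atomSide x false i h
  · show P.op.atomSide x true i h = P.atomSide x false i h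
    exact op_atomSide x true i h

lemma op_relevant (h : P.Relevant) : P.op.Relevant := by
  intro n x
  exact (congrArg P.op.IsCell (op_atom (P := P) x)).mpr (op_isCell (h n x))

lemma op_tlone {n : ℕ} {U : Finset (P.gen (n+1))} {x y : P.gen (n+1)} :
    P.op.tlone U x y ↔ P.tlone U y x := by
  unfold tlone
  constructor
  · rintro ⟨h1, h2, h3⟩
    refine ⟨h2, h1, ?_⟩
    obtain ⟨a, ha⟩ := h3
    rcases Finset.mem_inter.1 ha with ⟨ha1, ha2⟩
    exact ⟨a, Finset.mem_inter.2 ⟨ha2, ha1⟩⟩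
  · rintro ⟨h1, h2, h3⟩
    refine ⟨h2, h1, ?_⟩
    obtain ⟨a, ha⟩ := h3
    rcases Finset.mem_inter.1 ha with ⟨ha1, ha2⟩
    exact ⟨a, Finset.mem_inter.2 ⟨ha2, ha1⟩⟩

lemma op_tl {n : ℕ} {U : Finset (P.gen (n+1))} {x y : P.gen (n+1)} :
    P.op.tl U x y ↔ P.tl U y x :=
  ⟨fun h => transGen_flip (fun _ _ hh => op_tlone.1 hh) h,
   fun h => transGen_flip (fun _ _ hh => op_tlone.2 hh) h⟩

lemma op_isSegment {n : ℕ} {U V : Finset (P.gen (n+1))} :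
    P.op.IsSegment U V ↔ P.IsSegment U V := by
  unfold IsSegment
  constructor
  · intro h x y z hx hz h1 h2
    exact h z y x hz hx (op_tl.2 h2) (op_tl.2 h1)
  · intro h x y z hx hz h1 h2
    exact h z y x hz hx (op_tl.1 h2) (op_tl.1 h1)

lemma op_segmentCond {m : ℕ} {x : P.gen m} (h : P.SegmentCond x) : P.op.SegmentCond x := by
  intro n hn X hX ε hsub
  have hXc : P.IsCell X.op := op_isCell' hX
  have htop : (X.op).top = X.top := op_top (P := P.op) X
  have hs : P.atomSide x (!ε) (n+1) (le_of_lt hn) ⊆ (X.op).top := by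
    rw [htop, ← op_atomSide (P := P) x ε (n+1) (le_of_lt hn)]
    exact hsub
  have hseg : P.IsSegment (X.op).top (P.atomSide x (!ε) (n+1) (le_of_lt hn)) :=
    h n hn X.op hXc (!ε) hs
  rw [htop, ← op_atomSide (P := P) x ε (n+1) (le_of_lt hn)] at hseg
  exact (op_isSegment (P := P)).2 hseg

end OHG


namespace OHG

open Finset

attribute [local instance] Classical.propDecidable

variable {P : OHG}

lemma setSrc_empty {n : ℕ} : P.setSrc (∅ : Finset (P.gen (n+1))) = ∅ := rfl
lemma setTgt_empty {n : ℕ} : P.setTgt (∅ : Finset (P.gen (n+1))) = ∅ := rfl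

lemma mem_setSrc_erase {n : ℕ} {G : Finset (P.gen (n+1))} {g : P.gen (n+1)} (hg : g ∈ G)
    {a : P.gen n} : a ∈ P.setSrc G ↔ a ∈ P.src g ∨ a ∈ P.setSrc (G.erase g) := by
  simp only [mem_setSrc]
  constructor
  · rintro ⟨x, hx, ha⟩
    by_cases hxg : x = g
    · exact Or.inl (hxg ▸ ha)
    · exact Or.inr ⟨x, Finset.mem_erase.2 ⟨hxg, hx⟩, ha⟩
  · rintro (h | ⟨x, hx, ha⟩)
    · exact ⟨g, hg, h⟩
    · exact ⟨x, Finset.mem_of_mem_erase hx, ha⟩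

lemma mem_setTgt_erase {n : ℕ} {G : Finset (P.gen (n+1))} {g : P.gen (n+1)} (hg : g ∈ G)
    {a : P.gen n} : a ∈ P.setTgt G ↔ a ∈ P.tgt g ∨ a ∈ P.setTgt (G.erase g) := by
  simp only [mem_setTgt]
  constructor
  · rintro ⟨x, hx, ha⟩
    by_cases hxg : x = g
    · exact Or.inl (hxg ▸ ha)
    · exact Or.inr ⟨x, Finset.mem_erase.2 ⟨hxg, hx⟩, ha⟩
  · rintro (h | ⟨x, hx, ha⟩)
    · exact ⟨g, hg, h⟩
    · exact ⟨x, Finset.mem_of_mem_erase hx, ha⟩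

section FireMin

variable (hF1 : P.Acyclic) {n : ℕ} {G : Finset (P.gen (n+1))} {g : P.gen (n+1)}
  {T : Finset (P.gen n)}

/-- the sources of a minimal element are present -/
lemma min_src_sub (hff : P.ForkFree (n+1) G) (hglue : P.mp G ⊆ T)
    (hg : g ∈ G) (hmin : ∀ x ∈ G, ¬ P.step x g) : P.src g ⊆ T := by
  intro σ hσ
  refine hglue (Finset.mem_sdiff.2 ⟨mem_setSrc_of hg hσ, fun ht => ?_⟩)
  obtain ⟨x, hx, hax⟩ := mem_setTgt.1 ht
  exact hmin x hx (step_of_mem hax hσ)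

lemma min_src_setTgt_dj (hg : g ∈ G) (hmin : ∀ x ∈ G, ¬ P.step x g) :
    Dj (P.src g) (P.setTgt G) := by
  intro σ h1 h2
  obtain ⟨x, hx, hax⟩ := mem_setTgt.1 h2
  exact hmin x hx (step_of_mem hax h1)

/-- after firing a minimal element, the rest is still glueable -/
lemma erase_glueable (hff : P.ForkFree (n+1) G) (hglue : P.mp G ⊆ T)
    (hg : g ∈ G) (hmin : ∀ x ∈ G, ¬ P.step x g) :
    P.mp (G.erase g) ⊆ (T ∪ P.tgt g) \ P.src g := by
  intro β hβ
  obtain ⟨hβs, hβt⟩ := Finset.mem_sdiff.1 hβ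
  have hβns : β ∉ P.src g := by
    intro hh
    obtain ⟨y, hy, hay⟩ := mem_setSrc.1 hβs
    have hyG : y ∈ G := Finset.mem_of_mem_erase hy
    have hyg : y ≠ g := (Finset.mem_erase.1 hy).1
    exact ff_src_dj hff hyG hg hyg β hay hh
  by_cases hβtg : β ∈ P.tgt g
  · exact Finset.mem_sdiff.2 ⟨Finset.mem_union.2 (Or.inr hβtg), hβns⟩
  · refine Finset.mem_sdiff.2 ⟨Finset.mem_union.2 (Or.inl ?_), hβns⟩
    refine hglue (Finset.mem_sdiff.2 ⟨?_, ?_⟩)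
    · exact setSrc_mono (Finset.erase_subset g G) hβs
    · intro hh
      rcases (mem_setTgt_erase hg).1 hh with h1 | h1
      · exact hβtg h1
      · exact hβt h1

/-- the one-step activation composes -/
lemma erase_top_eq (hff : P.ForkFree (n+1) G)
    (hg : g ∈ G) (hmin : ∀ x ∈ G, ¬ P.step x g) :
    (((T ∪ P.tgt g) \ P.src g) ∪ P.setTgt (G.erase g)) \ P.setSrc (G.erase g) =
    (T ∪ P.setTgt G) \ P.setSrc G := by
  ext a
  have h1 : a ∈ P.setSrc G ↔ a ∈ P.src g ∨ a ∈ P.setSrc (G.erase g) := mem_setSrc_erase hg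
  have h2 : a ∈ P.setTgt G ↔ a ∈ P.tgt g ∨ a ∈ P.setTgt (G.erase g) := mem_setTgt_erase hg
  have h3 : a ∈ P.src g → a ∈ P.setTgt (G.erase g) → False := by
    intro hs ht
    obtain ⟨x, hx, hax⟩ := mem_setTgt.1 ht
    exact hmin x (Finset.mem_of_mem_erase hx) (step_of_mem hax hs)
  have h4 : a ∈ P.src g → a ∈ P.setSrc (G.erase g) → False := by
    intro hs ht
    obtain ⟨x, hx, hax⟩ := mem_setSrc.1 ht
    exact ff_src_dj hff hg (Finset.mem_of_mem_erase hx) (fun e => (Finset.mem_erase.1 hx).1 e.symm) a hs hax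
  simp only [Finset.mem_sdiff, Finset.mem_union]
  rw [h1, h2]
  constructor
  · rintro ⟨⟨h5 | h5, h6⟩ | h5, h7⟩
    · exact ⟨Or.inl h5, fun hh => hh.elim h6 h7⟩
    · exact ⟨Or.inr (Or.inl h5), fun hh => hh.elim h6 h7⟩
    · exact ⟨Or.inr (Or.inr h5), fun hh => hh.elim (fun hx => h3 hx h5) h7⟩
  · rintro ⟨h5, h6⟩
    have hnsg : a ∉ P.src g := fun hh => h6 (Or.inl hh)
    have hnSE : a ∉ P.setSrc (G.erase g) := fun hh => h6 (Or.inr hh)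
    rcases h5 with h5 | h5 | h5
    · exact ⟨Or.inl ⟨Or.inl h5, hnsg⟩, hnSE⟩
    · exact ⟨Or.inl ⟨Or.inr h5, hnsg⟩, hnSE⟩
    · exact ⟨Or.inr h5, hnSE⟩

/-- generic: downward-closed subsets of glueable sets are glueable -/
lemma glueable_closed {S T' : Finset (P.gen (n+1))} (hT : T' ⊆ S)
    (hclosed : ∀ x ∈ S, ∀ y ∈ T', P.step x y → x ∈ T')
    (hglue : P.mp S ⊆ T) : P.mp T' ⊆ T := by
  intro β hβ
  obtain ⟨hβs, hβt⟩ := Finset.mem_sdiff.1 hβ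
  refine hglue (Finset.mem_sdiff.2 ⟨setSrc_mono hT hβs, fun hh => ?_⟩)
  obtain ⟨x, hx, hax⟩ := mem_setTgt.1 hh
  obtain ⟨y, hy, hay⟩ := mem_setSrc.1 hβs
  have : x ∈ T' := hclosed x hx y hy (step_of_mem hax hay)
  exact hβt (mem_setTgt_of this hax)

end FireMin

end OHG

/-- The full statement of the gluing theorem at dimension `n`, for all
generalized parity complexes. -/
def OHG.FullStatement (n : ℕ) : Prop :=
  ∀ P : OHG, P.NonEmptySrcTgt → P.Acyclic → P.Relevant →
  (∀ (m : ℕ) (x : P.gen m), P.SegmentCond x) →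
  ∀ X : P.PreCell n, P.IsCell X →
  ∀ G : Finset (P.gen (n+1)), P.ForkFree (n+1) G → P.mp G ⊆ X.top →
    (P.IsCell (P.activation X G) ∧ P.setTgt G ∩ X.top = ∅) ∧
    P.IsCell (P.gluing X G) ∧
    (∀ G' : Finset (P.gen (n+1)), P.ForkFree (n+1) G' → P.pm G' ⊆ X.top →
      P.setSrc G' ∩ P.setTgt G = ∅)


namespace OHG

open Finset

attribute [local instance] Classical.propDecidable

/-- The singleton case of part (a) of the gluing theorem, by induction on the dimension. -/
lemma partA_single : ∀ (n : ℕ), (∀ m, m < n → OHG.FullStatement m) →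
    ∀ (P : OHG), P.NonEmptySrcTgt → P.Acyclic → P.Relevant →
    (∀ (m : ℕ) (x : P.gen m), P.SegmentCond x) →
    ∀ (X : P.PreCell n), P.IsCell X → ∀ (g : P.gen (n+1)), P.src g ⊆ X.top →
    P.IsCell (P.activation X {g}) ∧ Dj (P.tgt g) X.top
  | 0, IH, P, hF0, hF1, hF2, hF3, X, hX, g, hs_sub => by
    have hcard : X.top.card = 1 := (hX.1 0 le_rfl).1
    obtain ⟨b, hb⟩ := Finset.card_eq_one.1 hcard
    have hsrc_ne : (P.src g).Nonempty := (hF0 0 g).1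
    have hsg : P.src g = {b} := by
      rcases Finset.subset_singleton_iff.1 (hb ▸ hs_sub) with h | h
      · exact absurd h hsrc_ne.ne_empty
      · exact h
    have hbsrc : b ∈ P.src g := hsg ▸ Finset.mem_singleton_self b
    have hDj : Dj (P.tgt g) X.top := by
      intro a hat haX
      have : a = b := by rw [hb] at haX; exact Finset.mem_singleton.1 haX
      subst this
      exact src_tgt_dj hF1 hbsrc hat
    have htgff : P.ForkFree 0 (P.tgt g) := by
      have h1 : P.ForkFree 0 (P.atomSide g true 0 (by omega)) := ((hF2 1 g).1 0 (by omega)).2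
      rwa [atomSide_pos_succ hF1] at h1
    have hbtg : b ∉ P.tgt g := fun h => src_tgt_dj hF1 hbsrc h
    have hnewtop : (X.top ∪ P.setTgt {g}) \ P.setSrc {g} = P.tgt g := by
      rw [setTgt_singleton, setSrc_singleton, hb, hsg]
      ext a
      simp only [Finset.mem_sdiff, Finset.mem_union, Finset.mem_singleton]
      constructor
      · rintro ⟨h1 | h1, h2⟩
        · exact absurd h1 h2
        · exact h1
      · intro h1
        exact ⟨Or.inr h1, fun h2 => hbtg (h2 ▸ h1)⟩
    refine ⟨⟨?_, ?_⟩, hDj⟩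
    · intro i h
      have hi : i = 0 := by omega
      subst hi
      constructor
      · rw [show (P.activation X {g}).neg 0 h = (X.top ∪ P.setTgt {g}) \ P.setSrc {g} from
          activation_negN X {g} h, hnewtop]
        exact htgff
      · rw [show (P.activation X {g}).pos 0 h = (X.top ∪ P.setTgt {g}) \ P.setSrc {g} from
          activation_posN X {g} h, hnewtop]
        exact htgff
    · intro i h
      exact absurd h (by omega)
  | (m+1), IH, P, hF0, hF1, hF2, hF3, X, hX, g, hs_sub => by
    have hXff : P.ForkFree (m+1) X.top := (hX.1 (m+1) le_rfl).1
    have hXmove : P.Moves X.top (X.neg m (by omega)) (X.pos m (by omega)) :=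
      (hX.2 m le_rfl).1
    -- atom data
    have hA := hF2 (m+2) g
    have hsW : P.Moves (P.src g) ((P.atom g).neg m (by omega)) ((P.atom g).pos m (by omega)) := by
      have h2 := (hA.2 m (by omega)).1
      rwa [show ∀ h', (P.atom g).neg (m+1) h' = P.src g from
        fun h' => atomSide_neg_succ hF1 g h'] at h2
    have htW : P.Moves (P.tgt g) ((P.atom g).neg m (by omega)) ((P.atom g).pos m (by omega)) := by
      have h2 := (hA.2 m (by omega)).2
      rwa [show ∀ h', (P.atom g).pos (m+1) h' = P.tgt g from
        fun h' => atomSide_pos_succ hF1 g h'] at h2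
    have hsff : P.ForkFree (m+1) (P.src g) := by
      have h2 := (hA.1 (m+1) (by omega)).1
      rwa [show ∀ h', (P.atom g).neg (m+1) h' = P.src g from
        fun h' => atomSide_neg_succ hF1 g h'] at h2
    have htff : P.ForkFree (m+1) (P.tgt g) := by
      have h2 := (hA.1 (m+1) (by omega)).2
      rwa [show ∀ h', (P.atom g).pos (m+1) h' = P.tgt g from
        fun h' => atomSide_pos_succ hF1 g h'] at h2
    have hst_dj : Dj (P.src g) (P.tgt g) := fun a h1 h2 => src_tgt_dj hF1 h1 h2
    have hmpst : P.mp (P.src g) = P.mp (P.tgt g) := by rw [hsW.mp_eq, htW.mp_eq]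
    have hpmst : P.pm (P.src g) = P.pm (P.tgt g) := by rw [hsW.pm_eq, htW.pm_eq]
    -- segment property of the source
    have hseg : P.IsSegment X.top (P.src g) := by
      have h2 := hF3 (m+2) g m (by omega) X hX false
        (by rw [atomSide_neg_succ hF1]; exact hs_sub)
      rwa [atomSide_neg_succ hF1] at h2
    -- the block decomposition
    set B := (X.top \ P.src g).filter (fun c => ∃ e ∈ P.src g, P.tl X.top c e) with hBdef
    set A := (X.top \ P.src g) \ B with hAdef
    have hBsub : B ⊆ X.top := fun c hc => (Finset.mem_sdiff.1 (Finset.mem_filter.1 hc).1).1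
    have hBns : ∀ c ∈ B, c ∉ P.src g :=
      fun c hc => (Finset.mem_sdiff.1 (Finset.mem_filter.1 hc).1).2
    have hBch : ∀ c ∈ B, ∃ e ∈ P.src g, P.tl X.top c e :=
      fun c hc => (Finset.mem_filter.1 hc).2
    have hAsub : A ⊆ X.top := fun c hc =>
      (Finset.mem_sdiff.1 (Finset.mem_sdiff.1 hc).1).1
    have hAns : ∀ c ∈ A, c ∉ P.src g := fun c hc =>
      (Finset.mem_sdiff.1 (Finset.mem_sdiff.1 hc).1).2
    have hAnch : ∀ c ∈ A, ¬ ∃ e ∈ P.src g, P.tl X.top c e := by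
      intro c hc hch
      obtain ⟨h1, h2⟩ := Finset.mem_sdiff.1 hc
      exact h2 (Finset.mem_filter.2 ⟨h1, hch⟩)
    have hDjBs : Dj B (P.src g) := fun c h1 h2 => hBns c h1 h2
    have hDjBA : Dj B A := fun c h1 h2 => (Finset.mem_sdiff.1 h2).2 h1
    have hDjsA : Dj (P.src g) A := fun c h1 h2 => hAns c h2 h1
    have hpart : X.top = B ∪ (P.src g ∪ A) := by
      ext c
      simp only [Finset.mem_union]
      constructor
      · intro hc
        by_cases hcs : c ∈ P.src g
        · exact Or.inr (Or.inl hcs)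
        · by_cases hcB : c ∈ B
          · exact Or.inl hcB
          · exact Or.inr (Or.inr (Finset.mem_sdiff.2 ⟨Finset.mem_sdiff.2 ⟨hc, hcs⟩, hcB⟩))
      · rintro (hc | hc | hc)
        · exact hBsub hc
        · exact hs_sub hc
        · exact hAsub hc
    -- no-step facts
    have nst1 : ∀ d, (d ∈ P.src g ∨ d ∈ A) → ∀ b ∈ B, ¬ P.step d b := by
      intro d hd b hb hstep
      obtain ⟨e, he, hchain⟩ := hBch b hb
      have hdX : d ∈ X.top := hd.elim (fun h => hs_sub h) (fun h => hAsub h)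
      have htl1 : P.tl X.top d b := Relation.TransGen.single ⟨hdX, hBsub hb, hstep⟩
      rcases hd with hd | hd
      · exact hBns b hb (hseg d b e hd he htl1 hchain)
      · exact hAnch d hd ⟨e, he, Relation.TransGen.trans htl1 hchain⟩
    have nst2 : ∀ a' ∈ A, ∀ e ∈ P.src g, ¬ P.step a' e := by
      intro a' ha' e he hstep
      exact hAnch a' ha'
        ⟨e, he, Relation.TransGen.single ⟨hAsub ha', hs_sub he, hstep⟩⟩
    -- split the movement of the top of X
    have hXmove2 : P.Moves (B ∪ (P.src g ∪ A)) (X.neg m (by omega)) (X.pos m (by omega)) := by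
      rw [← hpart]; exact hXmove
    have hXff2 : P.ForkFree (m+1) (B ∪ (P.src g ∪ A)) := by rw [← hpart]; exact hXff
    have hsplit1 := hXmove2.split
      (ff_dj_setSrc hXff2 (fun c h1 h2 => (Finset.mem_union.1 h2).elim
        (fun h => hDjBs c h1 h) (fun h => hDjBA c h1 h)))
      (ff_dj_setTgt hXff2 (fun c h1 h2 => (Finset.mem_union.1 h2).elim
        (fun h => hDjBs c h1 h) (fun h => hDjBA c h1 h)))
      (by
        intro σ h1 h2
        obtain ⟨b, hb, hσb⟩ := mem_setSrc.1 h1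
        obtain ⟨d, hd, hσd⟩ := mem_setTgt.1 h2
        exact nst1 d (Finset.mem_union.1 hd) b hb (step_of_mem hσd hσb))
    set H := ((X.neg m (by omega)) ∪ P.setTgt B) \ P.setSrc B with hHdef
    have hBmove : P.Moves B (X.neg m (by omega)) H := hsplit1.1
    have hsAmove : P.Moves (P.src g ∪ A) H (X.pos m (by omega)) := hsplit1.2
    have hsAff : P.ForkFree (m+1) (P.src g ∪ A) :=
      ff_subset hXff (Finset.union_subset hs_sub hAsub)
    have hsplit2 := hsAmove.split
      (ff_dj_setSrc hsAff hDjsA) (ff_dj_setTgt hsAff hDjsA)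
      (by
        intro σ h1 h2
        obtain ⟨e, he, hσe⟩ := mem_setSrc.1 h1
        obtain ⟨a', ha', hσa⟩ := mem_setTgt.1 h2
        exact nst2 a' ha' e he (step_of_mem hσa hσe))
    set H' := (H ∪ P.setTgt (P.src g)) \ P.setSrc (P.src g) with hH'def
    have hsmove : P.Moves (P.src g) H H' := hsplit2.1
    have hAmove : P.Moves A H' (X.pos m (by omega)) := hsplit2.2
    -- the induction hypothesis at dimension m
    have IHm := IH m (by omega)
    have hdXcell : P.IsCell (nSrc X) := nSrc_isCell hX
    -- the cell with top H
    have hBff : P.ForkFree (m+1) B := ff_subset hXff hBsub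
    have hBglue : P.mp B ⊆ (nSrc X).top := hBmove.mp_sub
    have hHres := IHm P hF0 hF1 hF2 hF3 (nSrc X) hdXcell B hBff hBglue
    have hHcell : P.IsCell (P.activation (nSrc X) B) := hHres.1.1
    have hHctop : (P.activation (nSrc X) B).top = H := by
      rw [activation_top]; rfl
    -- t and s are glueable on the H-cell
    have htglue : P.mp (P.tgt g) ⊆ (P.activation (nSrc X) B).top := by
      rw [hHctop, ← hmpst]; exact hsmove.mp_sub
    have hHrest := IHm P hF0 hF1 hF2 hF3 _ hHcell (P.tgt g) htff htglue
    have Fact1 : Dj (P.setTgt (P.tgt g)) H := by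
      intro a h1 h2
      exact (dj_iff.2 hHrest.1.2) a h1 (by rw [hHctop]; exact h2)
    have hsglue : P.mp (P.src g) ⊆ (P.activation (nSrc X) B).top := by
      rw [hHctop]; exact hsmove.mp_sub
    have hHress := IHm P hF0 hF1 hF2 hF3 _ hHcell (P.src g) hsff hsglue
    have Fact1s : Dj (P.setTgt (P.src g)) H := by
      intro a h1 h2
      exact (dj_iff.2 hHress.1.2) a h1 (by rw [hHctop]; exact h2)
    -- movement of t out of H
    have htmoveH : P.Moves (P.tgt g) H
        ((H ∪ P.setTgt (P.tgt g)) \ P.setSrc (P.tgt g)) := by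
      have hgl := hHrest.2.1
      have h2 := (hgl.2 m le_rfl).1
      rw [gluing_neg_top] at h2
      rw [gluing_neg_le _ _ m _ le_rfl] at h2
      rw [gluing_pos_n] at h2
      rw [PreCell.negTop] at h2
      rw [hHctop] at h2
      exact h2
    have hH'eq : H' = (H ∪ P.setTgt (P.tgt g)) \ P.setSrc (P.tgt g) := by
      ext a
      have f1 := Finset.ext_iff.1 hmpst a
      have f2 := Finset.ext_iff.1 hpmst a
      simp only [OHG.mp, OHG.pm, Finset.mem_sdiff] at f1 f2
      rw [hH'def]
      simp only [Finset.mem_sdiff, Finset.mem_union]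
      constructor
      · rintro ⟨h5 | h5, h6⟩
        · refine ⟨Or.inl h5, fun h7 => ?_⟩
          by_cases h8 : a ∈ P.setTgt (P.tgt g)
          · exact Fact1 a h8 h5
          · exact h6 (f1.2 ⟨h7, h8⟩).1
        · have h9 : a ∈ P.setTgt (P.tgt g) ∧ a ∉ P.setSrc (P.tgt g) := f2.1 ⟨h5, h6⟩
          exact ⟨Or.inr h9.1, h9.2⟩
      · rintro ⟨h5 | h5, h6⟩
        · refine ⟨Or.inl h5, fun h7 => ?_⟩
          by_cases h8 : a ∈ P.setTgt (P.src g)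
          · exact Fact1s a h8 h5
          · exact h6 (f1.1 ⟨h7, h8⟩).1
        · have h9 : a ∈ P.setTgt (P.src g) ∧ a ∉ P.setSrc (P.src g) := f2.2 ⟨h5, h6⟩
          exact ⟨Or.inr h9.1, h9.2⟩
    have htmoveH' : P.Moves (P.tgt g) H H' := by rw [hH'eq]; exact htmoveH
    -- Fact2 : the sources of B do not meet the targets of t
    have Fact2 : Dj (P.setSrc B) (P.setTgt (P.tgt g)) := by
      intro σ h1 h2
      obtain ⟨b, hb, hσ⟩ := mem_setSrc.1 h1
      set Bb := B.filter (fun c => c = b ∨ P.tl B b c) with hBbdef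
      have hBbsub : Bb ⊆ B := Finset.filter_subset _ _
      have hbBb : b ∈ Bb := Finset.mem_filter.2 ⟨hb, Or.inl rfl⟩
      have hpB : B = (B \ Bb) ∪ Bb := by
        ext c
        simp only [Finset.mem_union, Finset.mem_sdiff]
        constructor
        · intro hc
          by_cases h : c ∈ Bb
          · exact Or.inr h
          · exact Or.inl ⟨hc, h⟩
        · rintro (⟨hc, _⟩ | hc)
          · exact hc
          · exact hBbsub hc
      have hBmove2 : P.Moves ((B \ Bb) ∪ Bb) (X.neg m (by omega)) H := by
        rw [← hpB]; exact hBmove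
      have hBff2 : P.ForkFree (m+1) ((B \ Bb) ∪ Bb) := by rw [← hpB]; exact hBff
      have hDj2 : Dj (B \ Bb) Bb := fun c hc1 hc2 => (Finset.mem_sdiff.1 hc1).2 hc2
      have hsplitB := hBmove2.split
        (ff_dj_setSrc hBff2 hDj2) (ff_dj_setTgt hBff2 hDj2)
        (by
          intro γ hg1 hg2
          obtain ⟨c', hc', hγ1⟩ := mem_setSrc.1 hg1
          obtain ⟨c, hc, hγ2⟩ := mem_setTgt.1 hg2
          obtain ⟨hc'B, hc'nb⟩ := Finset.mem_sdiff.1 hc'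
          refine hc'nb (Finset.mem_filter.2 ⟨hc'B, Or.inr ?_⟩)
          have hstep : P.tlone B c c' := ⟨hBbsub hc, hc'B, step_of_mem hγ2 hγ1⟩
          rcases (Finset.mem_filter.1 hc).2 with h | h
          · exact Relation.TransGen.single (h ▸ hstep)
          · exact Relation.TransGen.tail h hstep)
      have hpmBb : P.pm Bb ⊆ H := hsplitB.2.pm_sub
      have hres := hHrest.2.2 Bb (ff_subset hBff hBbsub)
        (by rw [hHctop]; exact hpmBb)
      exact (dj_iff.2 hres) σ (mem_setSrc_of hbBb hσ) h2
    -- the cell with top H'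
    have hBsmove : P.Moves (B ∪ P.src g) (X.neg m (by omega)) H' :=
      hBmove.comp hsmove
        (by
          intro σ h1 h2
          obtain ⟨b, hb, hσb⟩ := mem_setSrc.1 h1
          obtain ⟨e, he, hσe⟩ := mem_setTgt.1 h2
          exact nst1 e (Or.inl he) b hb (step_of_mem hσe hσb))
    have hBsff : P.ForkFree (m+1) (B ∪ P.src g) :=
      ff_subset hXff (Finset.union_subset hBsub hs_sub)
    have hH'res := IHm P hF0 hF1 hF2 hF3 (nSrc X) hdXcell (B ∪ P.src g) hBsff
      hBsmove.mp_sub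
    have hH'cell : P.IsCell (P.activation (nSrc X) (B ∪ P.src g)) := hH'res.1.1
    have hH'ctop : (P.activation (nSrc X) (B ∪ P.src g)).top = H' := by
      rw [activation_top]; exact hBsmove.1.symm
    -- Fact3 : the targets of A do not meet the sources of t
    have Fact3 : Dj (P.setSrc (P.tgt g)) (P.setTgt A) := by
      intro γ h1 h2
      obtain ⟨c, hc, hγ⟩ := mem_setTgt.1 h2
      set Ac := A.filter (fun x => x = c ∨ P.tl A x c) with hAcdef
      have hAcsub : Ac ⊆ A := Finset.filter_subset _ _
      have hcAc : c ∈ Ac := Finset.mem_filter.2 ⟨hc, Or.inl rfl⟩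
      have hpA : A = Ac ∪ (A \ Ac) := by
        ext x
        simp only [Finset.mem_union, Finset.mem_sdiff]
        constructor
        · intro hx
          by_cases h : x ∈ Ac
          · exact Or.inl h
          · exact Or.inr ⟨hx, h⟩
        · rintro (hx | ⟨hx, _⟩)
          · exact hAcsub hx
          · exact hx
      have hAmove2 : P.Moves (Ac ∪ (A \ Ac)) H' (X.pos m (by omega)) := by
        rw [← hpA]; exact hAmove
      have hAff : P.ForkFree (m+1) A := ff_subset hXff hAsub
      have hAff2 : P.ForkFree (m+1) (Ac ∪ (A \ Ac)) := by rw [← hpA]; exact hAff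
      have hDj2 : Dj Ac (A \ Ac) := fun x hx1 hx2 => (Finset.mem_sdiff.1 hx2).2 hx1
      have hsplitA := hAmove2.split
        (ff_dj_setSrc hAff2 hDj2) (ff_dj_setTgt hAff2 hDj2)
        (by
          intro γ' hg1 hg2
          obtain ⟨w, hw, hγ1⟩ := mem_setSrc.1 hg1
          obtain ⟨z, hz, hγ2⟩ := mem_setTgt.1 hg2
          obtain ⟨hzA, hznAc⟩ := Finset.mem_sdiff.1 hz
          refine hznAc (Finset.mem_filter.2 ⟨hzA, Or.inr ?_⟩)
          have hstep : P.tlone A z w := ⟨hzA, hAcsub hw, step_of_mem hγ2 hγ1⟩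
          rcases (Finset.mem_filter.1 hw).2 with h | h
          · exact Relation.TransGen.single (h ▸ hstep)
          · exact Relation.TransGen.head hstep h)
      have hAcmove : P.Moves Ac H' ((H' ∪ P.setTgt Ac) \ P.setSrc Ac) := hsplitA.1
      have hres := IHm P hF0 hF1 hF2 hF3 _ hH'cell Ac (ff_subset hAff hAcsub)
        (by rw [hH'ctop]; exact hAcmove.mp_sub)
      have hres2 := hres.2.2 (P.tgt g) htff
        (by rw [hH'ctop, ← hpmst]; exact hsmove.pm_sub)
      exact (dj_iff.2 hres2) γ h1 (mem_setTgt_of hcAc hγ)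
    have Fact4 : Dj H' (P.setSrc (P.tgt g)) := by
      intro a h1 h2
      rw [hH'eq] at h1
      exact (Finset.mem_sdiff.1 h1).2 h2
    -- KEY : the targets of g are not in the top of X
    have hKey : Dj (P.tgt g) X.top := by
      intro a hat haX
      have hans : a ∉ P.src g := fun h => hst_dj a h hat
      obtain ⟨γ, hγ⟩ := (hF0 m a).2
      have hγt : γ ∈ P.setTgt (P.tgt g) := mem_setTgt_of hat hγ
      have haBA : a ∈ B ∨ a ∈ A := by
        rw [hpart] at haX
        rcases Finset.mem_union.1 haX with h | h
        · exact Or.inl h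
        · rcases Finset.mem_union.1 h with h | h
          · exact absurd h hans
          · exact Or.inr h
      rcases haBA with haB | haA
      · rcases hBmove.tgt_mem (mem_setTgt_of haB hγ) with h | h
        · exact Fact1 γ hγt h
        · exact Fact2 γ h hγt
      · by_cases hγs : γ ∈ P.setSrc (P.tgt g)
        · exact Fact3 γ hγs (mem_setTgt_of haA hγ)
        · have hγpm : γ ∈ P.pm (P.tgt g) := Finset.mem_sdiff.2 ⟨hγt, hγs⟩
          rw [← hpmst] at hγpm
          obtain ⟨d₂, hd₂, hγd⟩ := mem_setTgt.1 (Finset.mem_sdiff.1 hγpm).1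
          have hne : a ≠ d₂ := fun e => hans (e ▸ hd₂)
          exact ff_tgt_dj hXff haX (hs_sub hd₂) hne γ hγ hγd
    -- the new top
    have hNTeq : (B ∪ P.tgt g) ∪ A = (X.top ∪ P.tgt g) \ P.src g := by
      ext a
      simp only [Finset.mem_union, Finset.mem_sdiff]
      constructor
      · rintro ((h | h) | h)
        · exact ⟨Or.inl (hBsub h), hBns a h⟩
        · exact ⟨Or.inr h, fun hh => hst_dj a hh h⟩
        · exact ⟨Or.inl (hAsub h), hAns a h⟩
      · rintro ⟨h1 | h1, h2⟩
        · rw [hpart] at h1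
          rcases Finset.mem_union.1 h1 with h | h
          · exact Or.inl (Or.inl h)
          · rcases Finset.mem_union.1 h with h | h
            · exact absurd h h2
            · exact Or.inr h
        · exact Or.inl (Or.inr h1)
    have hNTmove : P.Moves ((X.top ∪ P.tgt g) \ P.src g)
        (X.neg m (by omega)) (X.pos m (by omega)) := by
      rw [← hNTeq]
      refine (hBmove.comp htmoveH' Fact2).comp hAmove ?_
      intro σ h1 h2
      rw [setSrc_union] at h1
      obtain ⟨c, hc, hσc⟩ := mem_setTgt.1 h2
      rcases Finset.mem_union.1 h1 with h | h
      · obtain ⟨b, hb, hσb⟩ := mem_setSrc.1 h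
        exact nst1 c (Or.inr hc) b hb (step_of_mem hσc hσb)
      · exact Fact3 σ h h2
    -- fork-freeness of the new top
    have cross : ∀ c, c ∈ X.top → c ∉ P.src g → ∀ d ∈ P.tgt g,
        Dj (P.src c) (P.src d) ∧ Dj (P.tgt c) (P.tgt d) := by
      intro c hcX hcns d hd
      have hcBA : c ∈ B ∨ c ∈ A := by
        rw [hpart] at hcX
        rcases Finset.mem_union.1 hcX with h | h
        · exact Or.inl h
        · rcases Finset.mem_union.1 h with h | h
          · exact absurd h hcns
          · exact Or.inr h
      constructor
      · intro σ h1 h2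
        have hσt : σ ∈ P.setSrc (P.tgt g) := mem_setSrc_of hd h2
        by_cases hσp : σ ∈ P.setTgt (P.tgt g)
        · rcases hcBA with hcB | hcA
          · exact Fact2 σ (mem_setSrc_of hcB h1) hσp
          · rcases hAmove.src_mem (mem_setSrc_of hcA h1) with h | h
            · exact Fact4 σ h hσt
            · exact Fact3 σ hσt h
        · have hσmp : σ ∈ P.mp (P.tgt g) := Finset.mem_sdiff.2 ⟨hσt, hσp⟩
          rw [← hmpst] at hσmp
          obtain ⟨d₂, hd₂, hσd⟩ := mem_setSrc.1 (Finset.mem_sdiff.1 hσmp).1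
          have hne : c ≠ d₂ := fun e => hcns (e ▸ hd₂)
          exact ff_src_dj hXff hcX (hs_sub hd₂) hne σ h1 hσd
      · intro γ h1 h2
        have hγt : γ ∈ P.setTgt (P.tgt g) := mem_setTgt_of hd h2
        rcases hcBA with hcB | hcA
        · rcases hBmove.tgt_mem (mem_setTgt_of hcB h1) with h | h
          · exact Fact1 γ hγt h
          · exact Fact2 γ h hγt
        · by_cases hγs : γ ∈ P.setSrc (P.tgt g)
          · exact Fact3 γ hγs (mem_setTgt_of hcA h1)
          · have hγpm : γ ∈ P.pm (P.tgt g) := Finset.mem_sdiff.2 ⟨hγt, hγs⟩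
            rw [← hpmst] at hγpm
            obtain ⟨d₂, hd₂, hγd⟩ := mem_setTgt.1 (Finset.mem_sdiff.1 hγpm).1
            have hne : c ≠ d₂ := fun e => hcns (e ▸ hd₂)
            exact ff_tgt_dj hXff hcX (hs_sub hd₂) hne γ h1 hγd
    have hNTff : P.ForkFree (m+1) ((X.top ∪ P.tgt g) \ P.src g) := by
      intro x hx y hy hxy
      have hcase : ∀ z, z ∈ (X.top ∪ P.tgt g) \ P.src g →
          z ∈ P.tgt g ∨ (z ∈ X.top ∧ z ∉ P.src g ∧ z ∉ P.tgt g) := by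
        intro z hz
        obtain ⟨hz1, hz2⟩ := Finset.mem_sdiff.1 hz
        by_cases hzt : z ∈ P.tgt g
        · exact Or.inl hzt
        · rcases Finset.mem_union.1 hz1 with h | h
          · exact Or.inr ⟨h, hz2, hzt⟩
          · exact absurd h hzt
      rcases hcase x hx with hxt | ⟨hxX, hxns, hxnt⟩
      · rcases hcase y hy with hyt | ⟨hyX, hyns, hynt⟩
        · exact htff x hxt y hyt hxy
        · have hc := cross y hyX hyns x hxt
          exact ⟨dj_iff.1 (fun a p q => hc.1 a q p), dj_iff.1 (fun a p q => hc.2 a q p)⟩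
      · rcases hcase y hy with hyt | ⟨hyX, hyns, hynt⟩
        · have hc := cross x hxX hxns y hyt
          exact ⟨dj_iff.1 hc.1, dj_iff.1 hc.2⟩
        · exact hXff x hxX y hyX hxy
    -- assemble the activation cell
    refine ⟨⟨?_, ?_⟩, hKey⟩
    · intro i h
      by_cases hin : i = m+1
      · subst hin
        constructor
        · rw [activation_negN, setTgt_singleton, setSrc_singleton]
          exact hNTff
        · rw [activation_posN, setTgt_singleton, setSrc_singleton]
          exact hNTff
      · rw [activation_neg _ _ i h hin, activation_pos _ _ i h hin]
        exact hX.1 i h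
    · intro i h
      by_cases hin : i + 1 = m+1
      · have him : i = m := by omega
        subst him
        constructor
        · rw [activation_negN, setTgt_singleton, setSrc_singleton,
            activation_neg _ _ _ (by omega) (by omega), activation_pos _ _ _ (by omega) (by omega)]
          exact hNTmove
        · rw [activation_posN, setTgt_singleton, setSrc_singleton,
            activation_neg _ _ _ (by omega) (by omega), activation_pos _ _ _ (by omega) (by omega)]
          exact hNTmove
      · rw [activation_neg _ _ (i+1) h hin,
          activation_neg _ _ i (by omega) (by omega),
          activation_pos _ _ i (by omega) (by omega),
          activation_pos _ _ (i+1) h hin]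
        exact hX.2 i h

end OHG


namespace OHG

open Finset

attribute [local instance] Classical.propDecidable

variable {P : OHG}

lemma tg_rtg {α : Type} {r : α → α → Prop} {a b c : α}
    (h1 : Relation.TransGen r a b) (h2 : Relation.ReflTransGen r b c) :
    Relation.TransGen r a c := by
  induction h2 with
  | refl => exact h1
  | tail _ h ih => exact ih.tail h

lemma PreCell.posTop {n : ℕ} (Y : P.PreCell n) (h : n ≤ n) : Y.pos n h = Y.top :=
  Y.top_eq.symm

lemma op_activation_top {n : ℕ} (X : P.PreCell n) (S : Finset (P.gen (n+1))) :
    ((P.op.activation X.op S).op).top = (X.top ∪ P.setSrc S) \ P.setTgt S := by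
  rw [op_top (P := P.op)]
  exact (activation_top (P := P.op) X.op S).trans
    (congrArg (fun T => (T ∪ P.setSrc S) \ P.setTgt S) (op_top X))

/-- part (a) of the gluing theorem, by induction on the cardinality of `G` -/
lemma partA_aux (n : ℕ) (IH : ∀ m, m < n → OHG.FullStatement m)
    (P : OHG) (hF0 : P.NonEmptySrcTgt) (hF1 : P.Acyclic) (hF2 : P.Relevant)
    (hF3 : ∀ (m : ℕ) (x : P.gen m), P.SegmentCond x) :
    ∀ (k : ℕ) (X : P.PreCell n), P.IsCell X →
    ∀ G : Finset (P.gen (n+1)), P.ForkFree (n+1) G → P.mp G ⊆ X.top → G.card ≤ k →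
    P.IsCell (P.activation X G) ∧ Dj (P.setTgt G) X.top := by
  intro k
  induction k with
  | zero =>
    intro X hX G hff hglue hcard
    have hG : G = ∅ := Finset.card_eq_zero.1 (le_antisymm hcard (Nat.zero_le _))
    subst hG
    constructor
    · refine isCell_congr (X := X) ?_ ?_ hX
      · intro i h
        by_cases hin : i = n
        · subst hin
          rw [activation_negN, setTgt_empty, setSrc_empty, Finset.union_empty,
            Finset.sdiff_empty, PreCell.negTop]
        · rw [activation_neg _ _ i h hin]
      · intro i h
        by_cases hin : i = n
        · subst hin
          rw [activation_posN, setTgt_empty, setSrc_empty, Finset.union_empty,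
            Finset.sdiff_empty, PreCell.posTop]
        · rw [activation_pos _ _ i h hin]
    · intro a h1 _h2
      exact Finset.notMem_empty a h1
  | succ k ihk =>
    intro X hX G hff hglue hcard
    by_cases hGe : G = ∅
    · exact ihk X hX G hff hglue (by simp [hGe])
    · obtain ⟨g, hg, hmin⟩ := exists_minimal hF1 G (Finset.nonempty_iff_ne_empty.2 hGe)
      have hsg_sub : P.src g ⊆ X.top := min_src_sub hff hglue hg hmin
      obtain ⟨hX'cell, hKey⟩ := partA_single n IH P hF0 hF1 hF2 hF3 X hX g hsg_sub
      have hX'top : (P.activation X {g}).top = (X.top ∪ P.tgt g) \ P.src g := by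
        rw [activation_top, setTgt_singleton, setSrc_singleton]
      have hG'glue : P.mp (G.erase g) ⊆ (P.activation X {g}).top := by
        rw [hX'top]; exact erase_glueable hff hglue hg hmin
      have hG'card : (G.erase g).card ≤ k := by
        have := Finset.card_erase_of_mem hg
        have := Finset.card_pos.2 ⟨g, hg⟩
        omega
      obtain ⟨hactcell, hKey'⟩ := ihk (P.activation X {g}) hX'cell (G.erase g)
        (ff_subset hff (Finset.erase_subset _ _)) hG'glue hG'card
      constructor
      · refine isCell_congr ?_ ?_ hactcell
        · intro i h
          by_cases hin : i = n
          · subst hin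
            rw [activation_negN (P.activation X {g}) (G.erase g),
              activation_negN X G, hX'top]
            exact erase_top_eq hff hg hmin
          · rw [activation_neg (P.activation X {g}) (G.erase g) i h hin,
              activation_neg X {g} i h hin, activation_neg X G i h hin]
        · intro i h
          by_cases hin : i = n
          · subst hin
            rw [activation_posN (P.activation X {g}) (G.erase g),
              activation_posN X G, hX'top]
            exact erase_top_eq hff hg hmin
          · rw [activation_pos (P.activation X {g}) (G.erase g) i h hin,
              activation_pos X {g} i h hin, activation_pos X G i h hin]
      · intro γ h1 h2
        rcases (mem_setTgt_erase hg).1 h1 with h | h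
        · exact hKey γ h h2
        · by_cases hγs : γ ∈ P.src g
          · obtain ⟨y, hy, hγy⟩ := mem_setTgt.1 h
            exact hmin y (Finset.mem_of_mem_erase hy) (step_of_mem hγy hγs)
          · refine hKey' γ h ?_
            rw [hX'top]
            exact Finset.mem_sdiff.2 ⟨Finset.mem_union.2 (Or.inl h2), hγs⟩

lemma partA_all (n : ℕ) (IH : ∀ m, m < n → OHG.FullStatement m)
    (P : OHG) (hF0 : P.NonEmptySrcTgt) (hF1 : P.Acyclic) (hF2 : P.Relevant)
    (hF3 : ∀ (m : ℕ) (x : P.gen m), P.SegmentCond x)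
    (X : P.PreCell n) (hX : P.IsCell X)
    (G : Finset (P.gen (n+1))) (hff : P.ForkFree (n+1) G) (hglue : P.mp G ⊆ X.top) :
    P.IsCell (P.activation X G) ∧ Dj (P.setTgt G) X.top :=
  partA_aux n IH P hF0 hF1 hF2 hF3 G.card X hX G hff hglue le_rfl

/-- part (b) of the gluing theorem -/
lemma partB_all (n : ℕ) (IH : ∀ m, m < n → OHG.FullStatement m)
    (P : OHG) (hF0 : P.NonEmptySrcTgt) (hF1 : P.Acyclic) (hF2 : P.Relevant)
    (hF3 : ∀ (m : ℕ) (x : P.gen m), P.SegmentCond x)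
    (X : P.PreCell n) (hX : P.IsCell X)
    (G : Finset (P.gen (n+1))) (hff : P.ForkFree (n+1) G) (hglue : P.mp G ⊆ X.top) :
    P.IsCell (P.gluing X G) := by
  obtain ⟨hact, hKey⟩ := partA_all n IH P hF0 hF1 hF2 hF3 X hX G hff hglue
  have hMovesTop : P.Moves G X.top ((X.top ∪ P.setTgt G) \ P.setSrc G) := by
    refine ⟨rfl, ?_⟩
    ext a
    simp only [Finset.mem_sdiff, Finset.mem_union]
    constructor
    · intro ha
      have hnt : a ∉ P.setTgt G := fun hh => hKey a hh ha
      by_cases hs : a ∈ P.setSrc G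
      · exact ⟨Or.inr hs, hnt⟩
      · exact ⟨Or.inl ⟨Or.inl ha, hs⟩, hnt⟩
    · rintro ⟨h1 | h1, h2⟩
      · rcases h1.1 with h4 | h4
        · exact h4
        · exact absurd h4 h2
      · exact hglue (Finset.mem_sdiff.2 ⟨h1, h2⟩)
  constructor
  · intro i h
    by_cases hin1 : i = n+1
    · subst hin1
      constructor
      · rw [gluing_neg_top]; exact hff
      · rw [gluing_pos_top]; exact hff
    · have h' : i ≤ n := by omega
      by_cases hin2 : i = n
      · subst hin2
        constructor
        · rw [gluing_neg_le _ _ i h h']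
          exact (hX.1 i h').1
        · rw [gluing_pos_n]
          have h3 := (hact.1 i le_rfl).1
          rw [activation_negN] at h3
          exact h3
      · constructor
        · rw [gluing_neg_le _ _ i h h']
          exact (hX.1 i h').1
        · rw [gluing_pos_lt _ _ i h h' hin2]
          exact (hX.1 i h').2
  · intro i h
    by_cases hin1 : i = n
    · subst hin1
      constructor
      · rw [gluing_neg_top, gluing_neg_le _ _ i _ le_rfl, PreCell.negTop, gluing_pos_n]
        exact hMovesTop
      · rw [gluing_pos_top, gluing_neg_le _ _ i _ le_rfl, PreCell.negTop, gluing_pos_n]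
        exact hMovesTop
    · have h2 : i+1 ≤ n := by omega
      constructor
      · rw [gluing_neg_le _ _ (i+1) h h2, gluing_neg_le _ _ i _ (by omega),
          gluing_pos_lt _ _ i _ (by omega) (by omega)]
        exact (hX.2 i h2).1
      · by_cases hin2 : i+1 = n
        · subst hin2
          rw [gluing_pos_n, gluing_neg_le _ _ i _ (by omega),
            gluing_pos_lt _ _ i _ (by omega) (by omega)]
          have h3 := (hact.2 i (by omega)).1
          rw [activation_negN, activation_neg _ _ i (by omega) (by omega),
            activation_pos _ _ i (by omega) (by omega)] at h3
          exact h3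
        · rw [gluing_pos_lt _ _ (i+1) h h2 hin2, gluing_neg_le _ _ i _ (by omega),
            gluing_pos_lt _ _ i _ (by omega) (by omega)]
          exact (hX.2 i h2).2

/-- the core of part (c) : a glueable and a dually glueable generator
cannot interact -/
lemma partC_core (n : ℕ) (IH : ∀ m, m < n → OHG.FullStatement m)
    (P : OHG) (hF0 : P.NonEmptySrcTgt) (hF1 : P.Acyclic) (hF2 : P.Relevant)
    (hF3 : ∀ (m : ℕ) (x : P.gen m), P.SegmentCond x)
    (X : P.PreCell n) (hX : P.IsCell X) (g g' : P.gen (n+1))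
    (hgs : P.src g ⊆ X.top) (hg't : P.tgt g' ⊆ X.top) (hgg' : P.step g g') : False := by
  by_cases hc : ∃ β, β ∈ P.src g ∧ β ∈ P.tgt g'
  · obtain ⟨β, h1, h2⟩ := hc
    exact hF1 n g (Relation.TransGen.head hgg'
      (Relation.TransGen.single (step_of_mem h2 h1)))
  · have hF0' := op_nonEmpty hF0
    have hF1' := op_acyclic hF1
    have hF2' := op_relevant hF2
    have hF3' : ∀ (m : ℕ) (x : P.op.gen m), P.op.SegmentCond x :=
      fun m x => op_segmentCond (hF3 m x)
    have hXop : P.op.IsCell X.op := op_isCell hX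
    have hsub : P.op.src g' ⊆ X.op.top := by rw [op_top]; exact hg't
    obtain ⟨hQ, _⟩ := partA_single n IH P.op hF0' hF1' hF2' hF3' X.op hXop g' hsub
    have hQcell : P.IsCell (P.op.activation X.op {g'}).op := op_isCell' hQ
    have hQtop : ((P.op.activation X.op {g'}).op).top = (X.top ∪ P.src g') \ P.tgt g' := by
      exact (op_activation_top X {g'}).trans (by rw [setSrc_singleton, setTgt_singleton])
    have hgsQ : P.src g ⊆ ((P.op.activation X.op {g'}).op).top := by
      rw [hQtop]
      intro σ hσ
      exact Finset.mem_sdiff.2 ⟨Finset.mem_union.2 (Or.inl (hgs hσ)),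
        fun h2 => hc ⟨σ, hσ, h2⟩⟩
    obtain ⟨_, hDj⟩ := partA_single n IH P hF0 hF1 hF2 hF3 _ hQcell g hgsQ
    obtain ⟨α, hα⟩ := hgg'
    obtain ⟨hα1, hα2⟩ := Finset.mem_inter.1 hα
    refine hDj α hα1 ?_
    refine (Finset.ext_iff.1 hQtop α).2 ?_
    exact Finset.mem_sdiff.2 ⟨Finset.mem_union.2 (Or.inr hα2),
      fun h2 => src_tgt_dj hF1 hα2 h2⟩

/-- phase 2 of part (c) : shrink the glueable side -/
lemma partC_phase2 (n : ℕ) (IH : ∀ m, m < n → OHG.FullStatement m)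
    (P : OHG) (hF0 : P.NonEmptySrcTgt) (hF1 : P.Acyclic) (hF2 : P.Relevant)
    (hF3 : ∀ (m : ℕ) (x : P.gen m), P.SegmentCond x)
    (g g' : P.gen (n+1)) (hgg' : P.step g g') :
    ∀ (k : ℕ) (X : P.PreCell n), P.IsCell X →
    ∀ G : Finset (P.gen (n+1)), P.ForkFree (n+1) G → P.mp G ⊆ X.top →
    g ∈ G → (∀ y ∈ G, Relation.ReflTransGen P.step y g) → P.tgt g' ⊆ X.top →
    G.card ≤ k → False := by
  intro k
  induction k with
  | zero =>
    intro X hX G hff hglue hg hInv hg't hcard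
    have := Finset.card_pos.2 ⟨g, hg⟩
    omega
  | succ k ihk =>
    intro X hX G hff hglue hg hInv hg't hcard
    by_cases honly : ∀ y ∈ G, y = g
    · have hsg : P.src g ⊆ X.top := by
        intro σ hσ
        refine hglue (Finset.mem_sdiff.2 ⟨mem_setSrc_of hg hσ, fun ht => ?_⟩)
        obtain ⟨y, hy, hσy⟩ := mem_setTgt.1 ht
        have he := honly y hy
        subst he
        exact src_tgt_dj hF1 hσ hσy
      exact partC_core n IH P hF0 hF1 hF2 hF3 X hX g g' hsg hg't hgg'
    · push_neg at honly
      obtain ⟨z, hz, hzg⟩ := honly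
      obtain ⟨y₀, hy₀, hy₀ch, hy₀min⟩ := exists_minimal_from hF1 G hz
      have hy₀g : y₀ ≠ g := by
        intro he
        subst he
        exact hF1 n y₀ (tg_rtg (rtg_ne_transGen hy₀ch (fun e => hzg e.symm))
          (hInv z hz))
      have hy₀s : P.src y₀ ⊆ X.top := min_src_sub hff hglue hy₀ hy₀min
      obtain ⟨hX'cell, _⟩ := partA_single n IH P hF0 hF1 hF2 hF3 X hX y₀ hy₀s
      have hX'top : (P.activation X {y₀}).top = (X.top ∪ P.tgt y₀) \ P.src y₀ := by
        rw [activation_top, setTgt_singleton, setSrc_singleton]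
      have hG'glue : P.mp (G.erase y₀) ⊆ (P.activation X {y₀}).top := by
        rw [hX'top]; exact erase_glueable hff hglue hy₀ hy₀min
      refine ihk (P.activation X {y₀}) hX'cell (G.erase y₀)
        (ff_subset hff (Finset.erase_subset _ _)) hG'glue
        (Finset.mem_erase.2 ⟨fun e => hy₀g e.symm, hg⟩)
        (fun y hy => hInv y (Finset.mem_of_mem_erase hy)) ?_ ?_
      · intro γ hγ
        rw [hX'top]
        refine Finset.mem_sdiff.2 ⟨Finset.mem_union.2 (Or.inl (hg't hγ)), fun hσ => ?_⟩
        exact hF1 n g' (Relation.TransGen.tail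
          (tg_rtg (Relation.TransGen.single (step_of_mem hγ hσ)) (hInv y₀ hy₀)) hgg')
      · have := Finset.card_erase_of_mem hy₀
        have := Finset.card_pos.2 ⟨g, hg⟩
        omega

/-- phase 1 of part (c) : shrink the dually glueable side -/
lemma partC_phase1 (n : ℕ) (IH : ∀ m, m < n → OHG.FullStatement m)
    (P : OHG) (hF0 : P.NonEmptySrcTgt) (hF1 : P.Acyclic) (hF2 : P.Relevant)
    (hF3 : ∀ (m : ℕ) (x : P.gen m), P.SegmentCond x)
    (g g' : P.gen (n+1)) (hgg' : P.step g g') :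
    ∀ (k : ℕ) (X : P.PreCell n), P.IsCell X →
    ∀ G : Finset (P.gen (n+1)), P.ForkFree (n+1) G → P.mp G ⊆ X.top →
    g ∈ G → (∀ y ∈ G, Relation.ReflTransGen P.step y g) →
    ∀ G' : Finset (P.gen (n+1)), P.ForkFree (n+1) G' → P.pm G' ⊆ X.top →
    g' ∈ G' → (∀ x ∈ G', Relation.ReflTransGen P.step g' x) →
    G'.card ≤ k → False := by
  intro k
  induction k with
  | zero =>
    intro X hX G hff hglue hg hInv G' hff' hdual hg' hInv' hcard
    have := Finset.card_pos.2 ⟨g', hg'⟩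
    omega
  | succ k ihk =>
    intro X hX G hff hglue hg hInv G' hff' hdual hg' hInv' hcard
    by_cases honly : ∀ x ∈ G', x = g'
    · have hg't : P.tgt g' ⊆ X.top := by
        intro γ hγ
        refine hdual (Finset.mem_sdiff.2 ⟨mem_setTgt_of hg' hγ, fun hs => ?_⟩)
        obtain ⟨x, hx, hγx⟩ := mem_setSrc.1 hs
        have he := honly x hx
        subst he
        exact src_tgt_dj hF1 hγx hγ
      exact partC_phase2 n IH P hF0 hF1 hF2 hF3 g g' hgg' G.card X hX G hff hglue
        hg hInv hg't le_rfl
    · push_neg at honly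
      obtain ⟨z, hz, hzg'⟩ := honly
      obtain ⟨x₀, hx₀, hx₀ch, hx₀max⟩ := exists_maximal_from hF1 G' hz
      have hx₀g' : x₀ ≠ g' := by
        intro he
        subst he
        exact hF1 n x₀ (tg_rtg (rtg_ne_transGen (hInv' z hz) (fun e => hzg' e.symm))
          hx₀ch)
      have hF0' := op_nonEmpty hF0
      have hF1' := op_acyclic hF1
      have hF2' := op_relevant hF2
      have hF3' : ∀ (m : ℕ) (x : P.op.gen m), P.op.SegmentCond x :=
        fun m x => op_segmentCond (hF3 m x)
      have hXop : P.op.IsCell X.op := op_isCell hX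
      have hG'op_glue : P.op.mp G' ⊆ X.op.top := by rw [op_top]; exact hdual
      have hff'op : P.op.ForkFree (n+1) G' := op_ff.2 hff'
      have hx₀min_op : ∀ x ∈ G', ¬ P.op.step x x₀ :=
        fun x hx hst => hx₀max x hx (op_step.1 hst)
      have hx₀s_op : P.op.src x₀ ⊆ X.op.top :=
        min_src_sub hff'op hG'op_glue hx₀ hx₀min_op
      obtain ⟨hX₁cell_op, _⟩ := partA_single n IH P.op hF0' hF1' hF2' hF3'
        X.op hXop x₀ hx₀s_op
      have hX₁cell : P.IsCell (P.op.activation X.op {x₀}).op := op_isCell' hX₁cell_op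
      have hX₁top : ((P.op.activation X.op {x₀}).op).top =
          (X.top ∪ P.src x₀) \ P.tgt x₀ := by
        exact (op_activation_top X {x₀}).trans (by rw [setSrc_singleton, setTgt_singleton])
      have hGglue₁ : P.mp G ⊆ ((P.op.activation X.op {x₀}).op).top := by
        intro β hβ
        rw [hX₁top]
        refine Finset.mem_sdiff.2 ⟨Finset.mem_union.2 (Or.inl (hglue hβ)), fun hβt => ?_⟩
        obtain ⟨y, hy, hβy⟩ := mem_setSrc.1 (Finset.mem_sdiff.1 hβ).1
        refine hF1 n x₀ ?_
        have c1 : Relation.TransGen P.step x₀ y :=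
          Relation.TransGen.single (step_of_mem hβt hβy)
        have c2 : Relation.TransGen P.step x₀ g := tg_rtg c1 (hInv y hy)
        have c3 : Relation.TransGen P.step x₀ g' := c2.tail hgg'
        exact tg_rtg c3 (hInv' x₀ hx₀)
      have hG'₁dual : P.pm (G'.erase x₀) ⊆ ((P.op.activation X.op {x₀}).op).top := by
        have h2 := erase_glueable (P := P.op) hff'op hG'op_glue hx₀ hx₀min_op
        rw [op_top] at h2
        rw [hX₁top]
        exact h2
      exact ihk _ hX₁cell G hff hGglue₁ hg hInv (G'.erase x₀)
        (ff_subset hff' (Finset.erase_subset _ _)) hG'₁dual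
        (Finset.mem_erase.2 ⟨fun e => hx₀g' e.symm, hg'⟩)
        (fun x hx => hInv' x (Finset.mem_of_mem_erase hx))
        (by
          have := Finset.card_erase_of_mem hx₀
          have := Finset.card_pos.2 ⟨g', hg'⟩
          omega)

/-- part (c) of the gluing theorem -/
lemma partC_all (n : ℕ) (IH : ∀ m, m < n → OHG.FullStatement m)
    (P : OHG) (hF0 : P.NonEmptySrcTgt) (hF1 : P.Acyclic) (hF2 : P.Relevant)
    (hF3 : ∀ (m : ℕ) (x : P.gen m), P.SegmentCond x)
    (X : P.PreCell n) (hX : P.IsCell X)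
    (G : Finset (P.gen (n+1))) (hff : P.ForkFree (n+1) G) (hglue : P.mp G ⊆ X.top)
    (G' : Finset (P.gen (n+1))) (hff' : P.ForkFree (n+1) G') (hdual : P.pm G' ⊆ X.top) :
    P.setSrc G' ∩ P.setTgt G = ∅ := by
  refine dj_iff.1 ?_
  intro α h1 h2
  obtain ⟨g', hg', hα1⟩ := mem_setSrc.1 h1
  obtain ⟨g, hg, hα2⟩ := mem_setTgt.1 h2
  have hgg' : P.step g g' := step_of_mem hα2 hα1
  set G₀ := G.filter (fun x => x = g ∨ P.tl G x g) with hG₀def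
  have hG₀sub : G₀ ⊆ G := Finset.filter_subset _ _
  have hgG₀ : g ∈ G₀ := Finset.mem_filter.2 ⟨hg, Or.inl rfl⟩
  have hG₀closed : ∀ x ∈ G, ∀ y ∈ G₀, P.step x y → x ∈ G₀ := by
    intro x hx y hy hst
    have h3 : P.tlone G x y := ⟨hx, hG₀sub hy, hst⟩
    rcases (Finset.mem_filter.1 hy).2 with h | h
    · exact Finset.mem_filter.2 ⟨hx, Or.inr (Relation.TransGen.single (h ▸ h3))⟩
    · exact Finset.mem_filter.2 ⟨hx, Or.inr (Relation.TransGen.head h3 h)⟩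
  have hG₀glue : P.mp G₀ ⊆ X.top := glueable_closed hG₀sub hG₀closed hglue
  have hInvG : ∀ y ∈ G₀, Relation.ReflTransGen P.step y g := by
    intro y hy
    rcases (Finset.mem_filter.1 hy).2 with h | h
    · exact h ▸ Relation.ReflTransGen.refl
    · exact (tl_transGen h).to_reflTransGen
  set G'₀ := G'.filter (fun x => x = g' ∨ P.tl G' g' x) with hG'₀def
  have hG'₀sub : G'₀ ⊆ G' := Finset.filter_subset _ _
  have hg'G'₀ : g' ∈ G'₀ := Finset.mem_filter.2 ⟨hg', Or.inl rfl⟩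
  have hG'₀closed : ∀ x ∈ G', ∀ y ∈ G'₀, P.step y x → x ∈ G'₀ := by
    intro x hx y hy hst
    have h3 : P.tlone G' y x := ⟨hG'₀sub hy, hx, hst⟩
    rcases (Finset.mem_filter.1 hy).2 with h | h
    · exact Finset.mem_filter.2 ⟨hx, Or.inr (Relation.TransGen.single (h ▸ h3))⟩
    · exact Finset.mem_filter.2 ⟨hx, Or.inr (Relation.TransGen.tail h h3)⟩
  have hG'₀dual : P.pm G'₀ ⊆ X.top := by
    have h4 := glueable_closed (P := P.op) (S := G') (T' := G'₀) (T := X.top) hG'₀sub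
      (fun x hx y hy hst => hG'₀closed x hx y hy (op_step.1 hst)) hdual
    exact h4
  have hInvG' : ∀ x ∈ G'₀, Relation.ReflTransGen P.step g' x := by
    intro x hx
    rcases (Finset.mem_filter.1 hx).2 with h | h
    · exact h ▸ Relation.ReflTransGen.refl
    · exact (tl_transGen h).to_reflTransGen
  exact partC_phase1 n IH P hF0 hF1 hF2 hF3 g g' hgg' G'₀.card X hX
    G₀ (ff_subset hff hG₀sub) hG₀glue hgG₀ hInvG
    G'₀ (ff_subset hff' hG'₀sub) hG'₀dual hg'G'₀ hInvG' le_rfl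

end OHG

/-- the gluing theorem, by strong induction on the dimension -/
theorem OHG.master (n : ℕ) : OHG.FullStatement n := by
  induction n using Nat.strongRecOn with
  | ind n IH =>
    intro P hF0 hF1 hF2 hF3 X hX G hff hglue
    obtain ⟨hact, hKey⟩ := OHG.partA_all n IH P hF0 hF1 hF2 hF3 X hX G hff hglue
    refine ⟨⟨hact, OHG.dj_iff.1 hKey⟩, ?_, ?_⟩
    · exact OHG.partB_all n IH P hF0 hF1 hF2 hF3 X hX G hff hglue
    · intro G' hff' hdual
      exact OHG.partC_all n IH P hF0 hF1 hF2 hF3 X hX G hff hglue G' hff' hdual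


/-- The gluing theorem for generalized parity complexes (ω-hypergraphs satisfying
(F0)–(F3)): for an `n`-cell `X` and a finite fork-free set `G` of `(n+1)`-generators
glueable on `X` (`G⁻ \ G⁺ ⊆ X_n`):
(a) the activation of `G` on `X` is an `n`-cell and `G⁺ ∩ X_n = ∅`;
(b) the gluing of `X` on `G` is an `(n+1)`-cell;
(c) for every finite fork-free `G'` dually glueable on `X`, `G'⁻ ∩ G⁺ = ∅`. -/
theorem statement15 (P : OHG)
    (hF0 : P.NonEmptySrcTgt) (hF1 : P.Acyclic) (hF2 : P.Relevant)
    (hF3 : ∀ (m : ℕ) (x : P.gen m), P.SegmentCond x)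
    (n : ℕ) (X : P.PreCell n) (hX : P.IsCell X)
    (G : Finset (P.gen (n + 1))) (hGff : P.ForkFree (n + 1) G)
    (hglue : P.mp G ⊆ X.top) :
    (P.IsCell (P.activation X G) ∧ P.setTgt G ∩ X.top = ∅) ∧
    P.IsCell (P.gluing X G) ∧
    (∀ G' : Finset (P.gen (n + 1)), P.ForkFree (n + 1) G' → P.pm G' ⊆ X.top →
      P.setSrc G' ∩ P.setTgt G = ∅) := by
  exact OHG.master n P hF0 hF1 hF2 hF3 X hX G hGff hglue
end
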